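/- arXiv:1104.1742 — 9 statements merged into one kernel-verified Lean document; each statement's English description precedes it below -/
import Mathlib

section
/- Let g : (0,∞) → (0,∞) satisfy the optimal power-adaptation constraint E[(1/g(S) − 1/Z)·1{Z > g(S)}] = S for every S > 0. Then (i) g(S) → 0 as S → ∞; (ii) if M := sup{z : F(z) < 1} is finite, then g(S) → M as S → 0⁺; and (iii) if {z : F(z) < 1} is unbounded above, then g(S) → ∞ as S → 0⁺. -/
/-!
Write `A = {z | F(z) < 1}` and `Π(t) = E[(1/t − 1/Z)·1{Z > t}]` for the average power spent at
threshold `t`. Since `Π(t) ≤ 1/t`, the constraint `Π(g(S)) = S` gives `g(S) ≤ 1/S`. Since `Π(t)`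
vanishes as soon as `F(t) = 1`, every `g(S)` lies in `A`, so `g(S) ≤ sup A`. Conversely, for
`0 < t < t'` with `t' ∈ A`, any threshold `s ≤ t` spends at least `(1/t − 1/t')·P(Z > t') > 0`,
so `g(S) > t` once `S` is below this constant.
-/

open MeasureTheory Filter Topology

namespace WaterFilling

noncomputable def powerAlloc (t z : ℝ) : ℝ := if t < z then t⁻¹ - z⁻¹ else 0

section PowerAlloc

variable {s t t' : ℝ}

lemma powerAlloc_nonneg (ht : 0 < t) (z : ℝ) : 0 ≤ powerAlloc t z := by
  unfold powerAlloc
  split_ifs with h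
  · exact sub_nonneg.2 (inv_anti₀ ht h.le)
  · exact le_rfl

lemma powerAlloc_le_inv (ht : 0 < t) (z : ℝ) : powerAlloc t z ≤ t⁻¹ := by
  unfold powerAlloc
  split_ifs with h
  · exact sub_le_self _ (inv_nonneg.2 (ht.trans h).le)
  · exact inv_nonneg.2 ht.le

lemma measurable_powerAlloc (t : ℝ) : Measurable (powerAlloc t) :=
  Measurable.ite measurableSet_Ioi (measurable_const.sub measurable_inv) measurable_const

lemma indicator_le_powerAlloc (hs : 0 < s) (hst : s ≤ t) (htt' : t < t') (z : ℝ) :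
    (Set.Ioi t').indicator (fun _ => t⁻¹ - t'⁻¹) z ≤ powerAlloc s z := by
  by_cases hz : t' < z
  · have hsz : s < z := hst.trans_lt (htt'.trans hz)
    rw [Set.indicator_of_mem (show z ∈ Set.Ioi t' from hz), powerAlloc, if_pos hsz]
    gcongr
    exact (hs.trans_le hst).trans htt'
  · rw [Set.indicator_of_notMem (show z ∉ Set.Ioi t' from hz)]
    exact powerAlloc_nonneg hs z

end PowerAlloc

noncomputable def avgPower {Ω : Type*} [MeasurableSpace Ω] (P : Measure Ω) (Z : Ω → ℝ)
    (t : ℝ) : ℝ :=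
  ∫ ω, powerAlloc t (Z ω) ∂P

section AvgPower

variable {Ω : Type*} [MeasurableSpace Ω] {P : Measure Ω} {Z : Ω → ℝ} {s t t' : ℝ}

lemma avgPower_le_inv [IsProbabilityMeasure P] (ht : 0 < t) : avgPower P Z t ≤ t⁻¹ := by
  calc avgPower P Z t ≤ ∫ _, t⁻¹ ∂P :=
        integral_mono_of_nonneg (ae_of_all _ fun ω => powerAlloc_nonneg ht (Z ω))
          (integrable_const _) (ae_of_all _ fun ω => powerAlloc_le_inv ht (Z ω))
    _ = t⁻¹ := by simp

lemma avgPower_eq_zero (h : P {ω | t < Z ω} = 0) : avgPower P Z t = 0 := by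
  refine integral_eq_zero_of_ae ?_
  filter_upwards [measure_eq_zero_iff_ae_notMem.1 h] with ω hω
  exact if_neg hω

lemma mul_measureReal_le_avgPower [IsFiniteMeasure P] (hZ : Measurable Z) (hs : 0 < s)
    (hst : s ≤ t) (htt' : t < t') :
    (t⁻¹ - t'⁻¹) * P.real {ω | t' < Z ω} ≤ avgPower P Z s := by
  have hset : MeasurableSet {ω | t' < Z ω} := hZ measurableSet_Ioi
  calc (t⁻¹ - t'⁻¹) * P.real {ω | t' < Z ω}
      = ∫ ω, {ω | t' < Z ω}.indicator (fun _ => t⁻¹ - t'⁻¹) ω ∂P := by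
        rw [integral_indicator_const _ hset, smul_eq_mul, mul_comm]
    _ ≤ avgPower P Z s :=
        integral_mono_of_nonneg
          (ae_of_all _ fun ω => Set.indicator_nonneg
            (fun _ _ => sub_nonneg.2 (inv_anti₀ (hs.trans_le hst) htt'.le)) _)
          ((integrable_const s⁻¹).mono' ((measurable_powerAlloc s).comp hZ).aestronglyMeasurable
            (ae_of_all _ fun ω => by
              rw [Real.norm_of_nonneg (powerAlloc_nonneg hs _)]
              exact powerAlloc_le_inv hs _))
          (ae_of_all _ fun ω => indicator_le_powerAlloc hs hst htt' (Z ω))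

lemma measure_gt_pos_iff [IsProbabilityMeasure P] (hZ : Measurable Z) :
    0 < P {ω | t < Z ω} ↔ P {ω | Z ω ≤ t} < 1 := by
  have hcompl : {ω | t < Z ω} = {ω | Z ω ≤ t}ᶜ := by
    ext ω
    simp
  rw [hcompl, prob_compl_eq_one_sub (measurableSet_le hZ measurable_const), tsub_pos_iff_lt]

end AvgPower

section Threshold

variable {Ω : Type*} [MeasurableSpace Ω] {P : Measure Ω} [IsProbabilityMeasure P]
  {Z : Ω → ℝ} {g : ℝ → ℝ}

lemma measure_le_threshold_lt_one (hZ : Measurable Z)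
    (hg : ∀ S, 0 < S → avgPower P Z (g S) = S) {S : ℝ} (hS : 0 < S) :
    P {ω | Z ω ≤ g S} < 1 := by
  refine (measure_gt_pos_iff hZ).1 (pos_iff_ne_zero.2 fun h => ?_)
  exact hS.ne' ((hg S hS).symm.trans (avgPower_eq_zero h))

lemma eventually_lt_threshold (hZ : Measurable Z) (hgpos : ∀ S, 0 < S → 0 < g S)
    (hg : ∀ S, 0 < S → avgPower P Z (g S) = S) {t t' : ℝ} (ht : 0 < t) (htt' : t < t')
    (ht' : P {ω | Z ω ≤ t'} < 1) :
    ∀ᶠ S in 𝓝[>] 0, t < g S := by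
  have hc : 0 < (t⁻¹ - t'⁻¹) * P.real {ω | t' < Z ω} :=
    mul_pos (sub_pos.2 (inv_strictAnti₀ ht htt'))
      (ENNReal.toReal_pos ((measure_gt_pos_iff hZ).2 ht').ne' (measure_ne_top P _))
  filter_upwards [Ioo_mem_nhdsGT hc] with S ⟨hS, hSc⟩
  by_contra! hgt
  have := mul_measureReal_le_avgPower (P := P) hZ (hgpos S hS) hgt htt'
  linarith [hg S hS]

lemma tendsto_threshold_atTop (hgpos : ∀ S, 0 < S → 0 < g S)
    (hg : ∀ S, 0 < S → avgPower P Z (g S) = S) :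
    Tendsto g atTop (𝓝 0) := by
  have hle : ∀ S, 0 < S → g S ≤ S⁻¹ := fun S hS => by
    rw [← inv_inv (g S)]
    exact inv_anti₀ hS ((hg S hS).symm.trans_le (avgPower_le_inv (hgpos S hS)))
  refine squeeze_zero' ?_ ?_ tendsto_inv_atTop_zero
  · filter_upwards [eventually_gt_atTop 0] with S hS using (hgpos S hS).le
  · filter_upwards [eventually_gt_atTop 0] with S hS using hle S hS

lemma tendsto_threshold_nhdsGT_sSup (hZ : Measurable Z) (hgpos : ∀ S, 0 < S → 0 < g S)
    (hg : ∀ S, 0 < S → avgPower P Z (g S) = S)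
    (hbdd : BddAbove {z : ℝ | P {ω | Z ω ≤ z} < 1}) :
    Tendsto g (𝓝[>] 0) (𝓝 (sSup {z : ℝ | P {ω | Z ω ≤ z} < 1})) := by
  have hmem : ∀ S, 0 < S → g S ∈ {z : ℝ | P {ω | Z ω ≤ z} < 1} :=
    fun S hS => measure_le_threshold_lt_one hZ hg hS
  refine tendsto_order.2 ⟨fun b hb => ?_, fun b hb => ?_⟩
  · rcases le_or_gt b 0 with hb0 | hb0
    · filter_upwards [self_mem_nhdsWithin] with S hS using hb0.trans_lt (hgpos S hS)
    · obtain ⟨t', ht', hbt'⟩ := exists_lt_of_lt_csSup ⟨g 1, hmem 1 one_pos⟩ hb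
      exact eventually_lt_threshold hZ hgpos hg hb0 hbt' ht'
  · filter_upwards [self_mem_nhdsWithin] with S hS using (le_csSup hbdd (hmem S hS)).trans_lt hb

lemma tendsto_threshold_nhdsGT_atTop (hZ : Measurable Z) (hgpos : ∀ S, 0 < S → 0 < g S)
    (hg : ∀ S, 0 < S → avgPower P Z (g S) = S)
    (hunbdd : ¬ BddAbove {z : ℝ | P {ω | Z ω ≤ z} < 1}) :
    Tendsto g (𝓝[>] 0) atTop := by
  refine tendsto_atTop.2 fun b => ?_
  obtain ⟨t', ht', hbt'⟩ := not_bddAbove_iff.1 hunbdd (max b 1)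
  filter_upwards [eventually_lt_threshold hZ hgpos hg (one_pos.trans_le (le_max_right b 1))
    hbt' ht'] with S hS
  exact (le_max_left b 1).trans hS.le

end Threshold

end WaterFilling

theorem threshold_limits_general
    {Ω : Type*} [MeasurableSpace Ω] (P : Measure Ω) [IsProbabilityMeasure P]
    (Z : Ω → ℝ) (hZ : Measurable Z)
    (g : ℝ → ℝ) (hgpos : ∀ S, 0 < S → 0 < g S)
    (hg : ∀ S, 0 < S →
      ∫ ω, (if g S < Z ω then (g S)⁻¹ - (Z ω)⁻¹ else 0) ∂P = S) :
    Tendsto g atTop (𝓝 0) ∧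
    (BddAbove {z : ℝ | P {ω | Z ω ≤ z} < 1} →
      Tendsto g (𝓝[>] 0) (𝓝 (sSup {z : ℝ | P {ω | Z ω ≤ z} < 1}))) ∧
    (¬ BddAbove {z : ℝ | P {ω | Z ω ≤ z} < 1} →
      Tendsto g (𝓝[>] 0) atTop) :=
  ⟨WaterFilling.tendsto_threshold_atTop hgpos hg,
    WaterFilling.tendsto_threshold_nhdsGT_sSup hZ hgpos hg,
    WaterFilling.tendsto_threshold_nhdsGT_atTop hZ hgpos hg⟩

/-- **Limits of the water-filling threshold.**
Let `Z` be an effective channel gain with `P(Z > 0) = 1`, and let `g : (0,∞) → (0,∞)` satisfy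
the optimal power-adaptation constraint `E[(1/g(S) − 1/Z)·1{Z > g(S)}] = S` for every `S > 0`.
Then (i) `g(S) → 0` as `S → ∞`; (ii) if the set `{z : F(z) < 1}` is bounded above (its supremum
`M` is finite), then `g(S) → M` as `S → 0⁺`; (iii) if that set is unbounded above, then
`g(S) → ∞` as `S → 0⁺`. -/
theorem threshold_limits
    {Ω : Type*} [MeasurableSpace Ω] (P : Measure Ω) [IsProbabilityMeasure P]
    (Z : Ω → ℝ) (hZ : Measurable Z) (hZpos : P {ω | 0 < Z ω} = 1)
    (g : ℝ → ℝ) (hgpos : ∀ S, 0 < S → 0 < g S)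
    (hg : ∀ S, 0 < S →
      ∫ ω, (if g S < Z ω then (g S)⁻¹ - (Z ω)⁻¹ else 0) ∂P = S) :
    Tendsto g atTop (𝓝 0) ∧
    (BddAbove {z : ℝ | P {ω | Z ω ≤ z} < 1} →
      Tendsto g (𝓝[>] 0) (𝓝 (sSup {z : ℝ | P {ω | Z ω ≤ z} < 1}))) ∧
    (¬ BddAbove {z : ℝ | P {ω | Z ω ≤ z} < 1} →
      Tendsto g (𝓝[>] 0) atTop) :=
  threshold_limits_general P Z hZ g hgpos hg
end

section
/- Let g : (0,∞) → (0,∞) satisfy the optimal power-adaptation constraint E[(1/g(S) − 1/Z)·1{Z > g(S)}] = S for every S > 0. Then S·g(S) → 1 as S → ∞ (i.e., the high-SNR pre-log constant of the optimal power and rate adaptation scheme equals 1). -/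
/-!
Multiplying the power constraint by the threshold `c = g S` turns it into
`S * g S = E[(1 - c / Z) · 1{Z > c}]`. The integrand lies in `[0, 1]`, so `S * g S ≤ 1`, which
forces `g S → 0⁺`; and as `c → 0⁺` the integrand increases to `1{Z > 0}`, so by dominated
convergence the right-hand side tends to `P(Z > 0) = 1`.
-/

open MeasureTheory Filter Topology

section Waterfilling

variable {Ω : Type*} [MeasurableSpace Ω] (μ : Measure Ω) (Z : Ω → ℝ)

/-- `c` times the average power `E[(1/c - 1/Z) · 1{Z > c}]` of water-filling at threshold `c`. -/
noncomputable def scaledWaterfillingPower (c : ℝ) : ℝ :=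
  ∫ ω, (if c < Z ω then 1 - c / Z ω else 0) ∂μ

lemma ite_one_sub_div_mem_Icc {c z : ℝ} (hc : 0 ≤ c) :
    (if c < z then 1 - c / z else 0) ∈ Set.Icc (0 : ℝ) 1 := by
  split_ifs with hcz
  · have hz : 0 < z := hc.trans_lt hcz
    have hdiv : c / z ≤ 1 := (div_le_one hz).2 hcz.le
    exact ⟨by linarith, by linarith [div_nonneg hc hz.le]⟩
  · exact ⟨le_rfl, zero_le_one⟩

lemma scaledWaterfillingPower_eq_mul_integral {c : ℝ} (hc : c ≠ 0) :
    scaledWaterfillingPower μ Z c =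
      c * ∫ ω, (if c < Z ω then c⁻¹ - (Z ω)⁻¹ else 0) ∂μ := by
  rw [← integral_const_mul, scaledWaterfillingPower]
  congr 1 with ω
  split_ifs
  · rw [mul_sub, mul_inv_cancel₀ hc, div_eq_mul_inv]
  · rw [mul_zero]

lemma scaledWaterfillingPower_le_one [IsProbabilityMeasure μ] {c : ℝ} (hc : 0 ≤ c) :
    scaledWaterfillingPower μ Z c ≤ 1 := by
  have h := integral_mono_of_nonneg
    (Eventually.of_forall fun ω => (ite_one_sub_div_mem_Icc (z := Z ω) hc).1)
    (integrable_const (1 : ℝ) (μ := μ))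
    (Eventually.of_forall fun ω => (ite_one_sub_div_mem_Icc (z := Z ω) hc).2)
  simpa [scaledWaterfillingPower] using h

lemma tendsto_scaledWaterfillingPower_nhdsGT_zero [IsFiniteMeasure μ] {Z : Ω → ℝ}
    (hZ : Measurable Z) :
    Tendsto (scaledWaterfillingPower μ Z) (𝓝[>] 0) (𝓝 (μ.real {ω | 0 < Z ω})) := by
  have hpos : MeasurableSet {ω | 0 < Z ω} := measurableSet_lt measurable_const hZ
  rw [← integral_indicator_one hpos]
  refine tendsto_integral_filter_of_dominated_convergence (fun _ => 1) ?_ ?_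
    (integrable_const 1) (Eventually.of_forall fun ω => ?_)
  · exact Eventually.of_forall fun c =>
      (Measurable.ite (measurableSet_lt measurable_const hZ)
        (measurable_const.sub (measurable_const.div hZ)) measurable_const).aestronglyMeasurable
  · filter_upwards [self_mem_nhdsWithin] with c (hc : 0 < c)
    refine Eventually.of_forall fun ω => ?_
    obtain ⟨h0, h1⟩ := ite_one_sub_div_mem_Icc (z := Z ω) hc.le
    rwa [Real.norm_eq_abs, abs_of_nonneg h0]
  · by_cases hZω : 0 < Z ω
    · have hlim : Tendsto (fun c => 1 - c / Z ω) (𝓝[>] 0) (𝓝 1) := by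
        have : Tendsto (fun c => 1 - c / Z ω) (𝓝 0) (𝓝 (1 - 0 / Z ω)) :=
          (continuous_const.sub (continuous_id.div_const _)).tendsto 0
        simpa using this.mono_left nhdsWithin_le_nhds
      refine (hlim.congr' ?_).trans (by simp [hZω])
      filter_upwards [Ioo_mem_nhdsGT hZω] with c hc
      simp [hc.2]
    · refine tendsto_const_nhds.congr' ?_
      filter_upwards [self_mem_nhdsWithin] with c (hc : 0 < c)
      have : ¬ c < Z ω := fun h => hZω (hc.trans h)
      simp [this, hZω]

end Waterfilling

/-- **High-SNR pre-log constant of optimal power and rate adaptation.**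
Let `Z` be an effective channel gain with `P(Z > 0) = 1`, and let `g : (0,∞) → (0,∞)` satisfy
the optimal power-adaptation constraint `E[(1/g(S) − 1/Z)·1{Z > g(S)}] = S` for every `S > 0`.
Then `S·g(S) → 1` as `S → ∞`. -/
theorem prelog_OA
    {Ω : Type*} [MeasurableSpace Ω] (P : Measure Ω) [IsProbabilityMeasure P]
    (Z : Ω → ℝ) (hZ : Measurable Z) (hZpos : P {ω | 0 < Z ω} = 1)
    (g : ℝ → ℝ) (hgpos : ∀ S, 0 < S → 0 < g S)
    (hg : ∀ S, 0 < S →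
      ∫ ω, (if g S < Z ω then (g S)⁻¹ - (Z ω)⁻¹ else 0) ∂P = S) :
    Tendsto (fun S => S * g S) atTop (𝓝 1) := by
  have hpower : ∀ S, 0 < S → S * g S = scaledWaterfillingPower P Z (g S) := fun S hS => by
    rw [scaledWaterfillingPower_eq_mul_integral P Z (hgpos S hS).ne', hg S hS, mul_comm]
  have hg_le : ∀ S, 0 < S → g S ≤ S⁻¹ := fun S hS => by
    rw [inv_eq_one_div, le_div_iff₀' hS, hpower S hS]
    exact scaledWaterfillingPower_le_one P Z (hgpos S hS).le
  have hg_lim : Tendsto g atTop (𝓝[>] 0) := by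
    refine tendsto_nhdsWithin_iff.2 ⟨?_, ?_⟩
    · refine tendsto_of_tendsto_of_tendsto_of_le_of_le' tendsto_const_nhds
        tendsto_inv_atTop_zero ?_ ?_
      · filter_upwards [eventually_gt_atTop 0] with S hS using (hgpos S hS).le
      · filter_upwards [eventually_gt_atTop 0] with S hS using hg_le S hS
    · filter_upwards [eventually_gt_atTop 0] with S hS using hgpos S hS
  have hlim := (tendsto_scaledWaterfillingPower_nhdsGT_zero P hZ).comp hg_lim
  rw [measureReal_def, hZpos, ENNReal.toReal_one] at hlim
  refine hlim.congr' ?_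
  filter_upwards [eventually_gt_atTop 0] with S hS using (hpower S hS).symm
end

section
/- Fix S > 0. For 0 < t₁ ≤ t₂ one has C_CTCI(S, t₁) ≤ C_CTCI(S, t₂); moreover the inequality is strict whenever F(t₁) > 0 and F(t₂) < 1. In particular, for every S > 0 and every t > 0, log(1 + S/E[Z⁻¹]) ≤ C_CTCI(S, t) ≤ E[log(1 + S·Z)] (the CI and RA capacities), assuming 0 < E[Z⁻¹] < ∞ for the lower bound. -/
open MeasureTheory Filter Topology

/-- CDF `F(t) = ∫₀ᵗ f(z) dz` associated with a density `f` supported on `(0,∞)`. -/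
noncomputable def cdfOf (f : ℝ → ℝ) (t : ℝ) : ℝ := ∫ z in Set.Ioc 0 t, f z

/-- Maximal power ratio `D_max(t) = (F(t) + t·∫ₜ^∞ z⁻¹ f(z) dz)⁻¹` of the continuous-power
truncated channel inversion (CTCI) scheme with threshold `t`. -/
noncomputable def DmaxCTCI (f : ℝ → ℝ) (t : ℝ) : ℝ :=
  (cdfOf f t + t * ∫ z in Set.Ioi t, z⁻¹ * f z)⁻¹

/-- Ergodic capacity of the CTCI scheme with average power `S` and threshold `t`:
`C_CTCI(S,t) = ∫₀ᵗ log(1 + S·D_max(t)·z) f(z) dz + (1 − F(t))·log(1 + S·D_max(t)·t)`. -/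
noncomputable def C_CTCI (f : ℝ → ℝ) (S t : ℝ) : ℝ :=
  (∫ z in Set.Ioc 0 t, Real.log (1 + S * DmaxCTCI f t * z) * f z)
    + (1 - cdfOf f t) * Real.log (1 + S * DmaxCTCI f t * t)

private lemma log_le_chord {a b : ℝ} (ha : 0 < a) (hab : a ≤ b) :
    Real.log b - Real.log a ≤ (b - a) / a := by
  have hb : 0 < b := lt_of_lt_of_le ha hab
  rw [← Real.log_div hb.ne' ha.ne']
  calc Real.log (b / a) ≤ b / a - 1 := Real.log_le_sub_one_of_pos (div_pos hb ha)
    _ = (b - a) / a := by field_simp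

private lemma log_lt_chord {a b : ℝ} (ha : 0 < a) (hab : a < b) :
    Real.log b - Real.log a < (b - a) / a := by
  have hb : 0 < b := lt_trans ha hab
  rw [← Real.log_div hb.ne' ha.ne']
  have h1 : (1:ℝ) < b / a := (one_lt_div ha).mpr hab
  calc Real.log (b / a) < b / a - 1 :=
        Real.log_lt_sub_one_of_pos (div_pos hb ha) h1.ne'
    _ = (b - a) / a := by field_simp

private lemma chord_le_log {a b : ℝ} (ha : 0 < a) (hab : a ≤ b) :
    (b - a) / b ≤ Real.log b - Real.log a := by
  have hb : 0 < b := lt_of_lt_of_le ha hab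
  have h := Real.log_le_sub_one_of_pos (div_pos ha hb)
  rw [Real.log_div ha.ne' hb.ne'] at h
  have e : a / b - 1 = (a - b) / b := by field_simp
  rw [e] at h
  have : (a - b) / b = -((b - a) / b) := by ring
  linarith [this ▸ h]

private lemma chord_lt_log {a b : ℝ} (ha : 0 < a) (hab : a < b) :
    (b - a) / b < Real.log b - Real.log a := by
  have hb : 0 < b := lt_trans ha hab
  have h1 : a / b ≠ 1 := by
    have : a / b < 1 := (div_lt_one hb).mpr hab
    exact this.ne
  have h := Real.log_lt_sub_one_of_pos (div_pos ha hb) h1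
  rw [Real.log_div ha.ne' hb.ne'] at h
  have e : a / b - 1 = (a - b) / b := by field_simp
  rw [e] at h
  have : (a - b) / b = -((b - a) / b) := by ring
  linarith [this ▸ h]

private lemma pt_ineq {S c zs z x y : ℝ} (hS : 0 < S) (hc : 0 ≤ c) (hz : 0 < z)
    (hzs : 0 < zs) (hx : 0 ≤ x) (hy : 0 ≤ y)
    (h₁ : z ≤ zs → x ≤ y ∧ z * (1 + S * c) ≤ zs * (1 + S * x))
    (h₂ : zs ≤ z → y ≤ x ∧ zs * (1 + S * x) ≤ z * (1 + S * c)) :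
    S * zs / (1 + S * c) * ((x - y) / z) ≤ Real.log (1 + S * x) - Real.log (1 + S * y) := by
  have hax : (0:ℝ) < 1 + S * x := by positivity
  have hay : (0:ℝ) < 1 + S * y := by positivity
  have hac : (0:ℝ) < 1 + S * c := by positivity
  rcases le_total z zs with h | h
  · obtain ⟨hxy, hk⟩ := h₁ h
    have hchord := log_le_chord hax (by nlinarith : (1 + S * x) ≤ 1 + S * y)
    have hcoef : S / (1 + S * x) ≤ S * zs / (1 + S * c) / z := by
      rw [div_div, div_le_div_iff₀ hax (by positivity)]
      nlinarith
    have hmul := mul_le_mul_of_nonpos_left hcoef (by linarith : x - y ≤ 0)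
    have e1 : S * zs / (1 + S * c) * ((x - y) / z) = (x - y) * (S * zs / (1 + S * c) / z) := by
      ring
    have e2 : (1 + S * y - (1 + S * x)) / (1 + S * x) = -((x - y) * (S / (1 + S * x))) := by
      ring
    rw [e2] at hchord
    linarith [e1 ▸ hmul]
  · obtain ⟨hyx, hk⟩ := h₂ h
    have hchord := chord_le_log hay (by nlinarith : (1 + S * y) ≤ 1 + S * x)
    have hcoef : S * zs / (1 + S * c) / z ≤ S / (1 + S * x) := by
      rw [div_div, div_le_div_iff₀ (by positivity) hax]
      nlinarith
    have hmul := mul_le_mul_of_nonneg_left hcoef (by linarith : 0 ≤ x - y)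
    have e1 : S * zs / (1 + S * c) * ((x - y) / z) = (x - y) * (S * zs / (1 + S * c) / z) := by
      ring
    have e2 : (1 + S * x - (1 + S * y)) / (1 + S * x) = (x - y) * (S / (1 + S * x)) := by
      ring
    rw [e2] at hchord
    linarith [e1 ▸ hmul]

private lemma pt_ineq_lt {S c zs z x y : ℝ} (hS : 0 < S) (hc : 0 ≤ c) (hz : 0 < z)
    (hzs : 0 < zs) (hx : 0 ≤ x) (hy : 0 ≤ y)
    (h₁ : z ≤ zs → x ≤ y ∧ z * (1 + S * c) ≤ zs * (1 + S * x))
    (h₂ : zs ≤ z → y ≤ x ∧ zs * (1 + S * x) ≤ z * (1 + S * c))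
    (hne : x ≠ y) :
    S * zs / (1 + S * c) * ((x - y) / z) < Real.log (1 + S * x) - Real.log (1 + S * y) := by
  have hax : (0:ℝ) < 1 + S * x := by positivity
  have hay : (0:ℝ) < 1 + S * y := by positivity
  have hac : (0:ℝ) < 1 + S * c := by positivity
  rcases le_total z zs with h | h
  · obtain ⟨hxy, hk⟩ := h₁ h
    have hxy' : x < y := lt_of_le_of_ne hxy hne
    have hchord := log_lt_chord hax (by nlinarith : (1 + S * x) < 1 + S * y)
    have hcoef : S / (1 + S * x) ≤ S * zs / (1 + S * c) / z := by
      rw [div_div, div_le_div_iff₀ hax (by positivity)]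
      nlinarith
    have hmul := mul_le_mul_of_nonpos_left hcoef (by linarith : x - y ≤ 0)
    have e1 : S * zs / (1 + S * c) * ((x - y) / z) = (x - y) * (S * zs / (1 + S * c) / z) := by
      ring
    have e2 : (1 + S * y - (1 + S * x)) / (1 + S * x) = -((x - y) * (S / (1 + S * x))) := by
      ring
    rw [e2] at hchord
    linarith [e1 ▸ hmul]
  · obtain ⟨hyx, hk⟩ := h₂ h
    have hyx' : y < x := lt_of_le_of_ne hyx (Ne.symm hne)
    have hchord := chord_lt_log hay (by nlinarith : (1 + S * y) < 1 + S * x)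
    have hcoef : S * zs / (1 + S * c) / z ≤ S / (1 + S * x) := by
      rw [div_div, div_le_div_iff₀ (by positivity) hax]
      nlinarith
    have hmul := mul_le_mul_of_nonneg_left hcoef (by linarith : 0 ≤ x - y)
    have e1 : S * zs / (1 + S * c) * ((x - y) / z) = (x - y) * (S * zs / (1 + S * c) / z) := by
      ring
    have e2 : (1 + S * x - (1 + S * y)) / (1 + S * x) = (x - y) * (S / (1 + S * x)) := by
      ring
    rw [e2] at hchord
    linarith [e1 ▸ hmul]

private lemma split_int (g : ℝ → ℝ) {t : ℝ} (ht : 0 < t)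
    (hg : IntegrableOn g (Set.Ioi 0)) :
    ∫ z in Set.Ioi 0, g z = (∫ z in Set.Ioc 0 t, g z) + ∫ z in Set.Ioi t, g z := by
  rw [← Set.Ioc_union_Ioi_eq_Ioi ht.le,
    setIntegral_union (Set.Ioc_disjoint_Ioi le_rfl) measurableSet_Ioi
      (hg.mono_set (by rw [← Set.Ioc_union_Ioi_eq_Ioi ht.le]; exact Set.subset_union_left))
      (hg.mono_set (by rw [← Set.Ioc_union_Ioi_eq_Ioi ht.le]; exact Set.subset_union_right))]

private lemma core_le (f : ℝ → ℝ) (hf_nonneg : ∀ z, 0 ≤ f z)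
    {S zs c : ℝ} (hS : 0 < S) (hzs : 0 < zs) (hc : 0 ≤ c)
    (X₁ X₂ : ℝ → ℝ)
    (hX₁0 : ∀ z ∈ Set.Ioi 0, 0 ≤ X₁ z) (hX₂0 : ∀ z ∈ Set.Ioi 0, 0 ≤ X₂ z)
    (hcond₁ : ∀ z ∈ Set.Ioi 0, z ≤ zs →
      X₂ z ≤ X₁ z ∧ z * (1 + S * c) ≤ zs * (1 + S * X₂ z))
    (hcond₂ : ∀ z ∈ Set.Ioi 0, zs ≤ z →
      X₁ z ≤ X₂ z ∧ zs * (1 + S * X₂ z) ≤ z * (1 + S * c))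
    (hint₁ : IntegrableOn (fun z => X₁ z / z * f z) (Set.Ioi 0))
    (hint₂ : IntegrableOn (fun z => X₂ z / z * f z) (Set.Ioi 0))
    (heq : ∫ z in Set.Ioi 0, X₁ z / z * f z = ∫ z in Set.Ioi 0, X₂ z / z * f z)
    (hlog₁ : IntegrableOn (fun z => Real.log (1 + S * X₁ z) * f z) (Set.Ioi 0))
    (hlog₂ : IntegrableOn (fun z => Real.log (1 + S * X₂ z) * f z) (Set.Ioi 0)) :
    ∫ z in Set.Ioi 0, Real.log (1 + S * X₁ z) * f z
      ≤ ∫ z in Set.Ioi 0, Real.log (1 + S * X₂ z) * f z := by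
  set L : ℝ := S * zs / (1 + S * c) with hL
  set g : ℝ → ℝ := fun z => L * (X₂ z / z * f z - X₁ z / z * f z) with hg
  have hgint : IntegrableOn g (Set.Ioi 0) := (hint₂.sub hint₁).const_mul L
  have hgzero : ∫ z in Set.Ioi 0, g z = 0 := by
    simp only [hg]
    rw [integral_const_mul, integral_sub hint₂ hint₁, heq, sub_self, mul_zero]
  have hpt : ∀ z ∈ Set.Ioi 0, g z ≤
      (fun z => Real.log (1 + S * X₂ z) * f z - Real.log (1 + S * X₁ z) * f z) z := by
    intro z hz
    have hzpos : (0:ℝ) < z := hz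
    have key := pt_ineq (x := X₂ z) (y := X₁ z) hS hc hzpos hzs (hX₂0 z hz) (hX₁0 z hz)
      (fun h => hcond₁ z hz h) (fun h => hcond₂ z hz h)
    have := mul_le_mul_of_nonneg_right key (hf_nonneg z)
    have e : S * zs / (1 + S * c) * ((X₂ z - X₁ z) / z) * f z = g z := by
      simp only [hg, hL]; ring
    rw [e] at this
    calc g z ≤ (Real.log (1 + S * X₂ z) - Real.log (1 + S * X₁ z)) * f z := this
      _ = Real.log (1 + S * X₂ z) * f z - Real.log (1 + S * X₁ z) * f z := by ring
  have hd : IntegrableOn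
      (fun z => Real.log (1 + S * X₂ z) * f z - Real.log (1 + S * X₁ z) * f z)
      (Set.Ioi 0) := hlog₂.sub hlog₁
  have hmono := setIntegral_mono_on hgint hd measurableSet_Ioi hpt
  rw [hgzero, integral_sub hlog₂ hlog₁] at hmono
  linarith

private lemma core_lt (f : ℝ → ℝ) (hf_nonneg : ∀ z, 0 ≤ f z)
    (hf_int : IntegrableOn f (Set.Ioi 0))
    {S zs c : ℝ} (hS : 0 < S) (hzs : 0 < zs) (hc : 0 ≤ c)
    (X₁ X₂ : ℝ → ℝ)
    (hX₁0 : ∀ z ∈ Set.Ioi 0, 0 ≤ X₁ z) (hX₂0 : ∀ z ∈ Set.Ioi 0, 0 ≤ X₂ z)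
    (hcond₁ : ∀ z ∈ Set.Ioi 0, z ≤ zs →
      X₂ z ≤ X₁ z ∧ z * (1 + S * c) ≤ zs * (1 + S * X₂ z))
    (hcond₂ : ∀ z ∈ Set.Ioi 0, zs ≤ z →
      X₁ z ≤ X₂ z ∧ zs * (1 + S * X₂ z) ≤ z * (1 + S * c))
    (hint₁ : IntegrableOn (fun z => X₁ z / z * f z) (Set.Ioi 0))
    (hint₂ : IntegrableOn (fun z => X₂ z / z * f z) (Set.Ioi 0))
    (heq : ∫ z in Set.Ioi 0, X₁ z / z * f z = ∫ z in Set.Ioi 0, X₂ z / z * f z)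
    (hlog₁ : IntegrableOn (fun z => Real.log (1 + S * X₁ z) * f z) (Set.Ioi 0))
    (hlog₂ : IntegrableOn (fun z => Real.log (1 + S * X₂ z) * f z) (Set.Ioi 0))
    (s : Set ℝ) (hsmeas : MeasurableSet s) (hsub : s ⊆ Set.Ioi 0)
    (hne : ∀ z ∈ s, X₂ z ≠ X₁ z) (hfs : 0 < ∫ z in s, f z) :
    ∫ z in Set.Ioi 0, Real.log (1 + S * X₁ z) * f z
      < ∫ z in Set.Ioi 0, Real.log (1 + S * X₂ z) * f z := by
  set L : ℝ := S * zs / (1 + S * c) with hL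
  set h : ℝ → ℝ := fun z => Real.log (1 + S * X₂ z) * f z - Real.log (1 + S * X₁ z) * f z
      - L * (X₂ z / z * f z - X₁ z / z * f z) with hh
  have hgint : IntegrableOn (fun z => L * (X₂ z / z * f z - X₁ z / z * f z)) (Set.Ioi 0) :=
    (hint₂.sub hint₁).const_mul L
  have hgzero : ∫ z in Set.Ioi 0, L * (X₂ z / z * f z - X₁ z / z * f z) = 0 := by
    rw [integral_const_mul, integral_sub hint₂ hint₁, heq, sub_self, mul_zero]
  have hd : IntegrableOn
      (fun z => Real.log (1 + S * X₂ z) * f z - Real.log (1 + S * X₁ z) * f z)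
      (Set.Ioi 0) := hlog₂.sub hlog₁
  have hhint : IntegrableOn h (Set.Ioi 0) := hd.sub hgint
  have hpt : ∀ z ∈ Set.Ioi 0, 0 ≤ h z := by
    intro z hz
    have hzpos : (0:ℝ) < z := hz
    have key := pt_ineq (x := X₂ z) (y := X₁ z) hS hc hzpos hzs (hX₂0 z hz) (hX₁0 z hz)
      (fun h => hcond₁ z hz h) (fun h => hcond₂ z hz h)
    have h2 := mul_le_mul_of_nonneg_right key (hf_nonneg z)
    have e : S * zs / (1 + S * c) * ((X₂ z - X₁ z) / z) * f z
        = S * zs / (1 + S * c) * (X₂ z / z * f z - X₁ z / z * f z) := by ring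
    have e2 : (Real.log (1 + S * X₂ z) - Real.log (1 + S * X₁ z)) * f z
        = Real.log (1 + S * X₂ z) * f z - Real.log (1 + S * X₁ z) * f z := by ring
    simp only [hh, hL]
    linarith [e ▸ e2 ▸ h2]
  have hptlt : ∀ z ∈ s, f z ≠ 0 → 0 < h z := by
    intro z hzs' hfz
    have hz := hsub hzs'
    have hzpos : (0:ℝ) < z := hz
    have hfz' : 0 < f z := lt_of_le_of_ne (hf_nonneg z) (Ne.symm hfz)
    have key := pt_ineq_lt (x := X₂ z) (y := X₁ z) hS hc hzpos hzs (hX₂0 z hz) (hX₁0 z hz)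
      (fun h => hcond₁ z hz h) (fun h => hcond₂ z hz h) (hne z hzs')
    have h2 := mul_lt_mul_of_pos_right key hfz'
    have e : S * zs / (1 + S * c) * ((X₂ z - X₁ z) / z) * f z
        = S * zs / (1 + S * c) * (X₂ z / z * f z - X₁ z / z * f z) := by ring
    have e2 : (Real.log (1 + S * X₂ z) - Real.log (1 + S * X₁ z)) * f z
        = Real.log (1 + S * X₂ z) * f z - Real.log (1 + S * X₁ z) * f z := by ring
    simp only [hh, hL]
    linarith [e ▸ e2 ▸ h2]
  have hnn : 0 ≤ᵐ[volume.restrict s] f := Filter.Eventually.of_forall fun z => hf_nonneg z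
  have hfint_s : IntegrableOn f s := hf_int.mono_set hsub
  have hfmeas_s : 0 < volume (Function.support f ∩ s) :=
    (setIntegral_pos_iff_support_of_nonneg_ae hnn hfint_s).mp hfs
  have hsupp_sub : Function.support f ∩ s ⊆ Function.support h ∩ s := by
    rintro z ⟨hzf, hzs'⟩
    exact ⟨(hptlt z hzs' hzf).ne', hzs'⟩
  have hnn' : 0 ≤ᵐ[volume.restrict s] h :=
    (ae_restrict_iff' hsmeas).mpr (Filter.Eventually.of_forall fun z hz => hpt z (hsub hz))
  have hpos_s : 0 < ∫ z in s, h z :=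
    (setIntegral_pos_iff_support_of_nonneg_ae hnn' (hhint.mono_set hsub)).mpr
      (lt_of_lt_of_le hfmeas_s (measure_mono hsupp_sub))
  have hmono : ∫ z in s, h z ≤ ∫ z in Set.Ioi 0, h z := by
    refine setIntegral_mono_set hhint ?_ (HasSubset.Subset.eventuallyLE hsub)
    exact (ae_restrict_iff' measurableSet_Ioi).mpr
      (Filter.Eventually.of_forall fun z hz => hpt z hz)
  have hfinal : 0 < ∫ z in Set.Ioi 0, h z := lt_of_lt_of_le hpos_s hmono
  have heq2 : ∫ z in Set.Ioi 0, h z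
      = (∫ z in Set.Ioi 0, Real.log (1 + S * X₂ z) * f z)
        - (∫ z in Set.Ioi 0, Real.log (1 + S * X₁ z) * f z)
        - ∫ z in Set.Ioi 0, L * (X₂ z / z * f z - X₁ z / z * f z) := by
    simp only [hh]
    rw [integral_sub hd hgint, integral_sub hlog₂ hlog₁]
  rw [hgzero] at heq2
  linarith [heq2 ▸ hfinal]
private noncomputable def Gv (f : ℝ → ℝ) (t : ℝ) : ℝ :=
  ∫ z in Set.Ioi 0, min z t / z * f z

private lemma Gv_int (f : ℝ → ℝ) (hf_meas : Measurable f) (hf_nonneg : ∀ z, 0 ≤ f z)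
    (hf_int : IntegrableOn f (Set.Ioi 0)) {t : ℝ} (ht : 0 < t) :
    IntegrableOn (fun z => min z t / z * f z) (Set.Ioi 0) := by
  apply Integrable.mono' hf_int
  · exact (((measurable_id.min measurable_const).div measurable_id).mul
      hf_meas).aestronglyMeasurable
  · refine (ae_restrict_iff' measurableSet_Ioi).mpr (Filter.Eventually.of_forall fun z hz => ?_)
    have hz' : (0:ℝ) < z := hz
    have hm : 0 < min z t := lt_min hz' ht
    have h1 : min z t / z ≤ 1 := (div_le_one hz').mpr (min_le_left z t)
    have h0 : 0 ≤ min z t / z := by positivity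
    rw [Real.norm_eq_abs, abs_of_nonneg (mul_nonneg h0 (hf_nonneg z))]
    nlinarith [hf_nonneg z]

private lemma inv_f_int (f : ℝ → ℝ) (hf_meas : Measurable f) (hf_nonneg : ∀ z, 0 ≤ f z)
    (hf_int : IntegrableOn f (Set.Ioi 0)) {t : ℝ} (ht : 0 < t) :
    IntegrableOn (fun z => z⁻¹ * f z) (Set.Ioi t) := by
  apply Integrable.mono' ((hf_int.mono_set (Set.Ioi_subset_Ioi ht.le)).const_mul t⁻¹)
  · exact (measurable_inv.mul hf_meas).aestronglyMeasurable
  · refine (ae_restrict_iff' measurableSet_Ioi).mpr (Filter.Eventually.of_forall fun z hz => ?_)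
    have hz' : t < z := hz
    have hz0 : (0:ℝ) < z := lt_trans ht hz'
    have : z⁻¹ ≤ t⁻¹ := by
      rw [inv_le_inv₀ hz0 ht]; exact hz'.le
    rw [Real.norm_eq_abs, abs_of_nonneg (mul_nonneg (by positivity) (hf_nonneg z))]
    exact mul_le_mul_of_nonneg_right this (hf_nonneg z)

private lemma Gv_eq (f : ℝ → ℝ) (hf_meas : Measurable f) (hf_nonneg : ∀ z, 0 ≤ f z)
    (hf_int : IntegrableOn f (Set.Ioi 0)) {t : ℝ} (ht : 0 < t) :
    cdfOf f t + t * ∫ z in Set.Ioi t, z⁻¹ * f z = Gv f t := by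
  have hsplit := split_int _ ht (Gv_int f hf_meas hf_nonneg hf_int ht)
  have h1 : ∫ z in Set.Ioc 0 t, min z t / z * f z = cdfOf f t := by
    unfold cdfOf
    refine setIntegral_congr_fun measurableSet_Ioc fun z hz => ?_
    show min z t / z * f z = f z
    rw [min_eq_left hz.2, div_self (ne_of_gt hz.1), one_mul]
  have h2 : ∫ z in Set.Ioi t, min z t / z * f z = t * ∫ z in Set.Ioi t, z⁻¹ * f z := by
    rw [← integral_const_mul]
    refine setIntegral_congr_fun measurableSet_Ioi fun z hz => ?_
    show min z t / z * f z = t * (z⁻¹ * f z)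
    rw [min_eq_right (le_of_lt hz)]
    ring
  rw [Gv, hsplit, h1, h2]

private lemma ioi_f_eq (f : ℝ → ℝ) (hf_int : IntegrableOn f (Set.Ioi 0))
    (hf_one : ∫ z in Set.Ioi 0, f z = 1) {t : ℝ} (ht : 0 < t) :
    ∫ z in Set.Ioi t, f z = 1 - cdfOf f t := by
  have hsplit := split_int _ ht hf_int
  rw [hf_one] at hsplit
  unfold cdfOf
  linarith

private lemma Gv_le_one (f : ℝ → ℝ) (hf_meas : Measurable f) (hf_nonneg : ∀ z, 0 ≤ f z)
    (hf_int : IntegrableOn f (Set.Ioi 0)) (hf_one : ∫ z in Set.Ioi 0, f z = 1)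
    {t : ℝ} (ht : 0 < t) : Gv f t ≤ 1 := by
  rw [← hf_one]
  refine setIntegral_mono_on (Gv_int f hf_meas hf_nonneg hf_int ht) hf_int
    measurableSet_Ioi fun z hz => ?_
  have hz' : (0:ℝ) < z := hz
  have h1 : min z t / z ≤ 1 := (div_le_one hz').mpr (min_le_left z t)
  nlinarith [hf_nonneg z]

private lemma Gv_pos (f : ℝ → ℝ) (hf_meas : Measurable f) (hf_nonneg : ∀ z, 0 ≤ f z)
    (hf_int : IntegrableOn f (Set.Ioi 0)) (hf_one : ∫ z in Set.Ioi 0, f z = 1)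
    {t : ℝ} (ht : 0 < t) : 0 < Gv f t := by
  have hnnf : 0 ≤ᵐ[volume.restrict (Set.Ioi 0)] f :=
    Filter.Eventually.of_forall fun z => hf_nonneg z
  have hfpos : (0:ℝ) < ∫ z in Set.Ioi 0, f z := by rw [hf_one]; norm_num
  have hsupp := (setIntegral_pos_iff_support_of_nonneg_ae hnnf hf_int).mp hfpos
  have hnng : 0 ≤ᵐ[volume.restrict (Set.Ioi 0)] fun z => min z t / z * f z := by
    refine (ae_restrict_iff' measurableSet_Ioi).mpr (Filter.Eventually.of_forall fun z hz => ?_)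
    have hz' : (0:ℝ) < z := hz
    have hm : 0 < min z t := lt_min hz' ht
    show (0:ℝ) ≤ min z t / z * f z
    have := hf_nonneg z
    positivity
  refine (setIntegral_pos_iff_support_of_nonneg_ae hnng
    (Gv_int f hf_meas hf_nonneg hf_int ht)).mpr ?_
  refine lt_of_lt_of_le hsupp (measure_mono ?_)
  rintro z ⟨hzf, hz⟩
  have hz' : (0:ℝ) < z := hz
  have hm : 0 < min z t := lt_min hz' ht
  refine ⟨?_, hz⟩
  have hfz : 0 < f z := lt_of_le_of_ne (hf_nonneg z) (Ne.symm hzf)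
  have : 0 < min z t / z * f z := mul_pos (by positivity) hfz
  exact this.ne'

private lemma Gv_mono (f : ℝ → ℝ) (hf_meas : Measurable f) (hf_nonneg : ∀ z, 0 ≤ f z)
    (hf_int : IntegrableOn f (Set.Ioi 0)) {t₁ t₂ : ℝ} (ht₁ : 0 < t₁) (h12 : t₁ ≤ t₂) :
    Gv f t₁ ≤ Gv f t₂ := by
  refine setIntegral_mono_on (Gv_int f hf_meas hf_nonneg hf_int ht₁)
    (Gv_int f hf_meas hf_nonneg hf_int (lt_of_lt_of_le ht₁ h12))
    measurableSet_Ioi fun z hz => ?_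
  have hz' : (0:ℝ) < z := hz
  have h1 : min z t₁ ≤ min z t₂ := min_le_min le_rfl h12
  show min z t₁ / z * f z ≤ min z t₂ / z * f z
  rw [div_eq_mul_inv, div_eq_mul_inv]
  exact mul_le_mul_of_nonneg_right
    (mul_le_mul_of_nonneg_right h1 (by positivity)) (hf_nonneg z)

private lemma Gv_ratio (f : ℝ → ℝ) (hf_meas : Measurable f) (hf_nonneg : ∀ z, 0 ≤ f z)
    (hf_int : IntegrableOn f (Set.Ioi 0)) {t₁ t₂ : ℝ} (ht₁ : 0 < t₁) (h12 : t₁ ≤ t₂) :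
    t₁ * Gv f t₂ ≤ t₂ * Gv f t₁ := by
  have ht₂ : 0 < t₂ := lt_of_lt_of_le ht₁ h12
  unfold Gv
  rw [← integral_const_mul, ← integral_const_mul]
  refine setIntegral_mono_on
    ((Gv_int f hf_meas hf_nonneg hf_int ht₂).const_mul t₁)
    ((Gv_int f hf_meas hf_nonneg hf_int ht₁).const_mul t₂)
    measurableSet_Ioi fun z hz => ?_
  have hz' : (0:ℝ) < z := hz
  have key : t₁ * min z t₂ ≤ t₂ * min z t₁ := by
    rcases le_total z t₁ with h | h
    · rw [min_eq_left (le_trans h h12), min_eq_left h]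
      nlinarith
    · rw [min_eq_right h]
      rcases le_total z t₂ with h' | h'
      · rw [min_eq_left h']; nlinarith
      · rw [min_eq_right h']; nlinarith
  have hfz := hf_nonneg z
  have e1 : t₁ * (min z t₂ / z * f z) = (t₁ * min z t₂) * (f z / z) := by ring
  have e2 : t₂ * (min z t₁ / z * f z) = (t₂ * min z t₁) * (f z / z) := by ring
  rw [e1, e2]
  exact mul_le_mul_of_nonneg_right key (by positivity)

private lemma Gv_lt (f : ℝ → ℝ) (hf_meas : Measurable f) (hf_nonneg : ∀ z, 0 ≤ f z)
    (hf_int : IntegrableOn f (Set.Ioi 0)) (hf_one : ∫ z in Set.Ioi 0, f z = 1)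
    {t₁ t₂ : ℝ} (ht₁ : 0 < t₁) (h12 : t₁ < t₂) (hcdf : cdfOf f t₂ < 1) :
    Gv f t₁ < Gv f t₂ := by
  have ht₂ : 0 < t₂ := lt_trans ht₁ h12
  set d : ℝ → ℝ := fun z => min z t₂ / z * f z - min z t₁ / z * f z with hd
  have hdint : IntegrableOn d (Set.Ioi 0) :=
    (Gv_int f hf_meas hf_nonneg hf_int ht₂).sub (Gv_int f hf_meas hf_nonneg hf_int ht₁)
  have hnn : 0 ≤ᵐ[volume.restrict (Set.Ioi 0)] d := by
    refine (ae_restrict_iff' measurableSet_Ioi).mpr (Filter.Eventually.of_forall fun z hz => ?_)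
    have hz' : (0:ℝ) < z := hz
    have h1 : min z t₁ ≤ min z t₂ := min_le_min le_rfl h12.le
    have h2 : min z t₁ / z * f z ≤ min z t₂ / z * f z := by
      rw [div_eq_mul_inv, div_eq_mul_inv]
      exact mul_le_mul_of_nonneg_right
        (mul_le_mul_of_nonneg_right h1 (by positivity)) (hf_nonneg z)
    show (0:ℝ) ≤ d z
    simp only [hd]
    linarith
  have hpos2 : 0 < ∫ z in Set.Ioi t₂, f z := by
    rw [ioi_f_eq f hf_int hf_one ht₂]; linarith
  have hnnf2 : 0 ≤ᵐ[volume.restrict (Set.Ioi t₂)] f :=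
    Filter.Eventually.of_forall fun z => hf_nonneg z
  have hsupp2 := (setIntegral_pos_iff_support_of_nonneg_ae hnnf2
    (hf_int.mono_set (Set.Ioi_subset_Ioi ht₂.le))).mp hpos2
  have hdpos : 0 < ∫ z in Set.Ioi 0, d z := by
    refine (setIntegral_pos_iff_support_of_nonneg_ae hnn hdint).mpr ?_
    refine lt_of_lt_of_le hsupp2 (measure_mono ?_)
    rintro z ⟨hzf, hz⟩
    have hz2 : t₂ < z := hz
    have hz' : (0:ℝ) < z := lt_trans ht₂ hz2
    have hfz : 0 < f z := lt_of_le_of_ne (hf_nonneg z) (Ne.symm hzf)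
    have e : d z = (t₂ - t₁) / z * f z := by
      simp only [hd]
      rw [min_eq_right (le_of_lt hz2), min_eq_right (le_of_lt (lt_trans h12 hz2))]
      ring
    have hdz : 0 < d z := by
      rw [e]
      have h3 : 0 < t₂ - t₁ := by linarith
      exact mul_pos (div_pos h3 hz') hfz
    exact ⟨hdz.ne', hz'⟩
  have hsub : ∫ z in Set.Ioi 0, d z = Gv f t₂ - Gv f t₁ := by
    simp only [hd]
    unfold Gv
    rw [integral_sub (Gv_int f hf_meas hf_nonneg hf_int ht₂)
      (Gv_int f hf_meas hf_nonneg hf_int ht₁)]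
  linarith [hsub ▸ hdpos]
private lemma log_int (f : ℝ → ℝ) (hf_meas : Measurable f) (hf_nonneg : ∀ z, 0 ≤ f z)
    (hf_int : IntegrableOn f (Set.Ioi 0)) {S D t : ℝ} (hS : 0 ≤ S) (hD : 0 ≤ D)
    (ht : 0 < t) :
    IntegrableOn (fun z => Real.log (1 + S * (D * min z t)) * f z) (Set.Ioi 0) := by
  apply Integrable.mono' (hf_int.const_mul (Real.log (1 + S * (D * t))))
  · exact ((Real.measurable_log.comp
      ((((measurable_id.min measurable_const).const_mul D).const_mul S).const_add 1)).mul
      hf_meas).aestronglyMeasurable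
  · refine (ae_restrict_iff' measurableSet_Ioi).mpr (Filter.Eventually.of_forall fun z hz => ?_)
    have hz' : (0:ℝ) < z := hz
    have hm0 : 0 ≤ min z t := le_min hz'.le ht.le
    have hm1 : min z t ≤ t := min_le_right z t
    have h1 : (1:ℝ) ≤ 1 + S * (D * min z t) := by
      have := mul_nonneg hS (mul_nonneg hD hm0); linarith
    have h2 : 1 + S * (D * min z t) ≤ 1 + S * (D * t) := by
      have := mul_le_mul_of_nonneg_left (mul_le_mul_of_nonneg_left hm1 hD) hS; linarith
    have hln0 : 0 ≤ Real.log (1 + S * (D * min z t)) := Real.log_nonneg h1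
    have hlnm : Real.log (1 + S * (D * min z t)) ≤ Real.log (1 + S * (D * t)) :=
      Real.log_le_log (by linarith) h2
    rw [Real.norm_eq_abs, abs_of_nonneg (mul_nonneg hln0 (hf_nonneg z))]
    exact mul_le_mul_of_nonneg_right hlnm (hf_nonneg z)

private lemma EX_int (f : ℝ → ℝ) (hf_meas : Measurable f) (hf_nonneg : ∀ z, 0 ≤ f z)
    (hf_int : IntegrableOn f (Set.Ioi 0)) {D t : ℝ} (ht : 0 < t) :
    IntegrableOn (fun z => (D * min z t) / z * f z) (Set.Ioi 0) := by
  have e : (fun z => (D * min z t) / z * f z) = fun z => D * (min z t / z * f z) := by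
    funext z; ring
  rw [e]
  exact (Gv_int f hf_meas hf_nonneg hf_int ht).const_mul D

private lemma EX_eq (f : ℝ → ℝ) (hf_meas : Measurable f) (hf_nonneg : ∀ z, 0 ≤ f z)
    (hf_int : IntegrableOn f (Set.Ioi 0)) (hf_one : ∫ z in Set.Ioi 0, f z = 1)
    {t : ℝ} (ht : 0 < t) :
    ∫ z in Set.Ioi 0, ((Gv f t)⁻¹ * min z t) / z * f z = 1 := by
  have e : (fun z => ((Gv f t)⁻¹ * min z t) / z * f z)
      = fun z => (Gv f t)⁻¹ * (min z t / z * f z) := by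
    funext z; ring
  rw [e, integral_const_mul]
  exact inv_mul_cancel₀ (Gv_pos f hf_meas hf_nonneg hf_int hf_one ht).ne'

private lemma C_eq (f : ℝ → ℝ) (hf_meas : Measurable f) (hf_nonneg : ∀ z, 0 ≤ f z)
    (hf_int : IntegrableOn f (Set.Ioi 0)) (hf_one : ∫ z in Set.Ioi 0, f z = 1)
    {S t : ℝ} (hS : 0 ≤ S) (ht : 0 < t) :
    C_CTCI f S t
      = ∫ z in Set.Ioi 0, Real.log (1 + S * ((Gv f t)⁻¹ * min z t)) * f z := by
  have hGpos := Gv_pos f hf_meas hf_nonneg hf_int hf_one ht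
  have hD : DmaxCTCI f t = (Gv f t)⁻¹ := by
    unfold DmaxCTCI
    rw [Gv_eq f hf_meas hf_nonneg hf_int ht]
  have hDpos : 0 < (Gv f t)⁻¹ := inv_pos.mpr hGpos
  have hsplit := split_int _ ht
    (log_int f hf_meas hf_nonneg hf_int hS hDpos.le ht (D := (Gv f t)⁻¹))
  have h1 : ∫ z in Set.Ioc 0 t, Real.log (1 + S * ((Gv f t)⁻¹ * min z t)) * f z
      = ∫ z in Set.Ioc 0 t, Real.log (1 + S * DmaxCTCI f t * z) * f z := by
    refine setIntegral_congr_fun measurableSet_Ioc fun z hz => ?_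
    show Real.log (1 + S * ((Gv f t)⁻¹ * min z t)) * f z
      = Real.log (1 + S * DmaxCTCI f t * z) * f z
    rw [min_eq_left hz.2, hD, mul_assoc]
  have h2 : ∫ z in Set.Ioi t, Real.log (1 + S * ((Gv f t)⁻¹ * min z t)) * f z
      = (1 - cdfOf f t) * Real.log (1 + S * DmaxCTCI f t * t) := by
    have e : ∫ z in Set.Ioi t, Real.log (1 + S * ((Gv f t)⁻¹ * min z t)) * f z
        = ∫ z in Set.Ioi t, Real.log (1 + S * DmaxCTCI f t * t) * f z := by
      refine setIntegral_congr_fun measurableSet_Ioi fun z hz => ?_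
      show Real.log (1 + S * ((Gv f t)⁻¹ * min z t)) * f z
        = Real.log (1 + S * DmaxCTCI f t * t) * f z
      rw [min_eq_right (le_of_lt hz), hD, mul_assoc]
    rw [e, integral_const_mul, ioi_f_eq f hf_int hf_one ht, mul_comm]
  rw [C_CTCI, ← h1, ← h2, ← hsplit]
private lemma ctci_mono (f : ℝ → ℝ) (hf_meas : Measurable f) (hf_nonneg : ∀ z, 0 ≤ f z)
    (hf_int : IntegrableOn f (Set.Ioi 0)) (hf_one : ∫ z in Set.Ioi 0, f z = 1)
    {S t₁ t₂ : ℝ} (hS : 0 < S) (ht₁ : 0 < t₁) (h12 : t₁ ≤ t₂) :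
    C_CTCI f S t₁ ≤ C_CTCI f S t₂ := by
  have ht₂ : 0 < t₂ := lt_of_lt_of_le ht₁ h12
  have hG₁ := Gv_pos f hf_meas hf_nonneg hf_int hf_one ht₁
  have hG₂ := Gv_pos f hf_meas hf_nonneg hf_int hf_one ht₂
  have hG12 : Gv f t₁ ≤ Gv f t₂ := Gv_mono f hf_meas hf_nonneg hf_int ht₁ h12
  have hratio : t₁ * Gv f t₂ ≤ t₂ * Gv f t₁ := Gv_ratio f hf_meas hf_nonneg hf_int ht₁ h12
  have hD₁ : 0 < (Gv f t₁)⁻¹ := inv_pos.mpr hG₁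
  have hD₂ : 0 < (Gv f t₂)⁻¹ := inv_pos.mpr hG₂
  have hD21 : (Gv f t₂)⁻¹ ≤ (Gv f t₁)⁻¹ := by
    rw [inv_le_inv₀ hG₂ hG₁]; exact hG12
  set c : ℝ := (Gv f t₁)⁻¹ * t₁ with hcdef
  have hc : 0 < c := mul_pos hD₁ ht₁
  set zs : ℝ := Gv f t₂ * c with hzsdef
  have hzs : 0 < zs := mul_pos hG₂ hc
  have hG₁c : Gv f t₁ * c = t₁ := by rw [hcdef]; field_simp
  have hzc : (Gv f t₂)⁻¹ * zs = c := by rw [hzsdef]; field_simp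
  have ht₁zs : t₁ ≤ zs := by rw [hzsdef]; nlinarith
  have hzst₂ : zs ≤ t₂ := by
    have h1 : zs * Gv f t₁ = t₁ * Gv f t₂ := by
      rw [hzsdef]; linear_combination Gv f t₂ * hG₁c
    nlinarith
  rw [C_eq f hf_meas hf_nonneg hf_int hf_one hS.le ht₁,
      C_eq f hf_meas hf_nonneg hf_int hf_one hS.le ht₂]
  refine core_le f hf_nonneg hS hzs hc.le
    (fun z => (Gv f t₁)⁻¹ * min z t₁) (fun z => (Gv f t₂)⁻¹ * min z t₂)
    ?_ ?_ ?_ ?_ ?_ ?_ ?_ ?_ ?_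
  · intro z hz
    have hz' : (0:ℝ) < z := hz
    exact mul_nonneg hD₁.le (le_min hz'.le ht₁.le)
  · intro z hz
    have hz' : (0:ℝ) < z := hz
    exact mul_nonneg hD₂.le (le_min hz'.le ht₂.le)
  · intro z hz hzzs
    have hz' : (0:ℝ) < z := hz
    have hzt₂ : z ≤ t₂ := le_trans hzzs hzst₂
    have hmin₂ : min z t₂ = z := min_eq_left hzt₂
    constructor
    · show (Gv f t₂)⁻¹ * min z t₂ ≤ (Gv f t₁)⁻¹ * min z t₁
      rcases le_total z t₁ with h | h
      · rw [hmin₂, min_eq_left h]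
        exact mul_le_mul_of_nonneg_right hD21 hz'.le
      · rw [hmin₂, min_eq_right h]
        calc (Gv f t₂)⁻¹ * z ≤ (Gv f t₂)⁻¹ * zs :=
              mul_le_mul_of_nonneg_left hzzs hD₂.le
          _ = c := hzc
          _ = (Gv f t₁)⁻¹ * t₁ := hcdef
    · show z * (1 + S * c) ≤ zs * (1 + S * ((Gv f t₂)⁻¹ * min z t₂))
      rw [hmin₂, ← hzc]
      nlinarith
  · intro z hz hzsz
    have hz' : (0:ℝ) < z := hz
    constructor
    · show (Gv f t₁)⁻¹ * min z t₁ ≤ (Gv f t₂)⁻¹ * min z t₂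
      have h2 : zs ≤ min z t₂ := le_min hzsz hzst₂
      calc (Gv f t₁)⁻¹ * min z t₁ ≤ (Gv f t₁)⁻¹ * t₁ :=
            mul_le_mul_of_nonneg_left (min_le_right z t₁) hD₁.le
        _ = c := hcdef.symm
        _ = (Gv f t₂)⁻¹ * zs := hzc.symm
        _ ≤ (Gv f t₂)⁻¹ * min z t₂ := mul_le_mul_of_nonneg_left h2 hD₂.le
    · show zs * (1 + S * ((Gv f t₂)⁻¹ * min z t₂)) ≤ z * (1 + S * c)
      rw [← hzc]
      have hmz : min z t₂ ≤ z := min_le_left z t₂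
      have h3 : zs * min z t₂ ≤ zs * z := mul_le_mul_of_nonneg_left hmz hzs.le
      have h4 : S * (Gv f t₂)⁻¹ * (zs * min z t₂) ≤ S * (Gv f t₂)⁻¹ * (zs * z) :=
        mul_le_mul_of_nonneg_left h3 (mul_nonneg hS.le hD₂.le)
      nlinarith [h4, hzsz]
  · exact EX_int f hf_meas hf_nonneg hf_int ht₁
  · exact EX_int f hf_meas hf_nonneg hf_int ht₂
  · rw [EX_eq f hf_meas hf_nonneg hf_int hf_one ht₁,
      EX_eq f hf_meas hf_nonneg hf_int hf_one ht₂]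
  · exact log_int f hf_meas hf_nonneg hf_int hS.le hD₁.le ht₁
  · exact log_int f hf_meas hf_nonneg hf_int hS.le hD₂.le ht₂
private lemma ctci_strict (f : ℝ → ℝ) (hf_meas : Measurable f) (hf_nonneg : ∀ z, 0 ≤ f z)
    (hf_int : IntegrableOn f (Set.Ioi 0)) (hf_one : ∫ z in Set.Ioi 0, f z = 1)
    {S t₁ t₂ : ℝ} (hS : 0 < S) (ht₁ : 0 < t₁) (h12 : t₁ < t₂)
    (hcdf₁ : 0 < cdfOf f t₁) (hcdf₂ : cdfOf f t₂ < 1) :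
    C_CTCI f S t₁ < C_CTCI f S t₂ := by
  have ht₂ : 0 < t₂ := lt_trans ht₁ h12
  have hG₁ := Gv_pos f hf_meas hf_nonneg hf_int hf_one ht₁
  have hG₂ := Gv_pos f hf_meas hf_nonneg hf_int hf_one ht₂
  have hG12 : Gv f t₁ ≤ Gv f t₂ := Gv_mono f hf_meas hf_nonneg hf_int ht₁ h12.le
  have hratio : t₁ * Gv f t₂ ≤ t₂ * Gv f t₁ := Gv_ratio f hf_meas hf_nonneg hf_int ht₁ h12.le
  have hD₁ : 0 < (Gv f t₁)⁻¹ := inv_pos.mpr hG₁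
  have hD₂ : 0 < (Gv f t₂)⁻¹ := inv_pos.mpr hG₂
  have hGlt : Gv f t₁ < Gv f t₂ :=
    Gv_lt f hf_meas hf_nonneg hf_int hf_one ht₁ h12 hcdf₂
  have hD21lt : (Gv f t₂)⁻¹ < (Gv f t₁)⁻¹ := by
    rw [inv_lt_inv₀ hG₂ hG₁]; exact hGlt
  have hD21 : (Gv f t₂)⁻¹ ≤ (Gv f t₁)⁻¹ := hD21lt.le
  set c : ℝ := (Gv f t₁)⁻¹ * t₁ with hcdef
  have hc : 0 < c := mul_pos hD₁ ht₁
  set zs : ℝ := Gv f t₂ * c with hzsdef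
  have hzs : 0 < zs := mul_pos hG₂ hc
  have hG₁c : Gv f t₁ * c = t₁ := by rw [hcdef]; field_simp
  have hzc : (Gv f t₂)⁻¹ * zs = c := by rw [hzsdef]; field_simp
  have ht₁zs : t₁ ≤ zs := by rw [hzsdef]; nlinarith
  have hzst₂ : zs ≤ t₂ := by
    have h1 : zs * Gv f t₁ = t₁ * Gv f t₂ := by
      rw [hzsdef]; linear_combination Gv f t₂ * hG₁c
    nlinarith
  rw [C_eq f hf_meas hf_nonneg hf_int hf_one hS.le ht₁,
      C_eq f hf_meas hf_nonneg hf_int hf_one hS.le ht₂]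
  refine core_lt f hf_nonneg hf_int hS hzs hc.le
    (fun z => (Gv f t₁)⁻¹ * min z t₁) (fun z => (Gv f t₂)⁻¹ * min z t₂)
    ?_ ?_ ?_ ?_ ?_ ?_ ?_ ?_ ?_ (Set.Ioc 0 t₁) measurableSet_Ioc
    (fun z hz => lt_of_lt_of_le hz.1 le_rfl) ?hne ?hfs
  · intro z hz
    have hz' : (0:ℝ) < z := hz
    exact mul_nonneg hD₁.le (le_min hz'.le ht₁.le)
  · intro z hz
    have hz' : (0:ℝ) < z := hz
    exact mul_nonneg hD₂.le (le_min hz'.le ht₂.le)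
  · intro z hz hzzs
    have hz' : (0:ℝ) < z := hz
    have hzt₂ : z ≤ t₂ := le_trans hzzs hzst₂
    have hmin₂ : min z t₂ = z := min_eq_left hzt₂
    constructor
    · show (Gv f t₂)⁻¹ * min z t₂ ≤ (Gv f t₁)⁻¹ * min z t₁
      rcases le_total z t₁ with h | h
      · rw [hmin₂, min_eq_left h]
        exact mul_le_mul_of_nonneg_right hD21 hz'.le
      · rw [hmin₂, min_eq_right h]
        calc (Gv f t₂)⁻¹ * z ≤ (Gv f t₂)⁻¹ * zs :=
              mul_le_mul_of_nonneg_left hzzs hD₂.le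
          _ = c := hzc
          _ = (Gv f t₁)⁻¹ * t₁ := hcdef
    · show z * (1 + S * c) ≤ zs * (1 + S * ((Gv f t₂)⁻¹ * min z t₂))
      rw [hmin₂, ← hzc]
      nlinarith
  · intro z hz hzsz
    have hz' : (0:ℝ) < z := hz
    constructor
    · show (Gv f t₁)⁻¹ * min z t₁ ≤ (Gv f t₂)⁻¹ * min z t₂
      have h2 : zs ≤ min z t₂ := le_min hzsz hzst₂
      calc (Gv f t₁)⁻¹ * min z t₁ ≤ (Gv f t₁)⁻¹ * t₁ :=
            mul_le_mul_of_nonneg_left (min_le_right z t₁) hD₁.le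
        _ = c := hcdef.symm
        _ = (Gv f t₂)⁻¹ * zs := hzc.symm
        _ ≤ (Gv f t₂)⁻¹ * min z t₂ := mul_le_mul_of_nonneg_left h2 hD₂.le
    · show zs * (1 + S * ((Gv f t₂)⁻¹ * min z t₂)) ≤ z * (1 + S * c)
      rw [← hzc]
      have hmz : min z t₂ ≤ z := min_le_left z t₂
      have h3 : zs * min z t₂ ≤ zs * z := mul_le_mul_of_nonneg_left hmz hzs.le
      have h4 : S * (Gv f t₂)⁻¹ * (zs * min z t₂) ≤ S * (Gv f t₂)⁻¹ * (zs * z) :=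
        mul_le_mul_of_nonneg_left h3 (mul_nonneg hS.le hD₂.le)
      nlinarith [h4, hzsz]
  · exact EX_int f hf_meas hf_nonneg hf_int ht₁
  · exact EX_int f hf_meas hf_nonneg hf_int ht₂
  · rw [EX_eq f hf_meas hf_nonneg hf_int hf_one ht₁,
      EX_eq f hf_meas hf_nonneg hf_int hf_one ht₂]
  · exact log_int f hf_meas hf_nonneg hf_int hS.le hD₁.le ht₁
  · exact log_int f hf_meas hf_nonneg hf_int hS.le hD₂.le ht₂
  case hne =>
    intro z hz
    show (Gv f t₂)⁻¹ * min z t₂ ≠ (Gv f t₁)⁻¹ * min z t₁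
    rw [min_eq_left hz.2, min_eq_left (le_trans hz.2 h12.le)]
    exact (mul_lt_mul_of_pos_right hD21lt hz.1).ne
  case hfs => exact hcdf₁

private lemma ctci_ci (f : ℝ → ℝ) (hf_meas : Measurable f) (hf_nonneg : ∀ z, 0 ≤ f z)
    (hf_int : IntegrableOn f (Set.Ioi 0)) (hf_one : ∫ z in Set.Ioi 0, f z = 1)
    {S t : ℝ} (hS : 0 < S) (ht : 0 < t)
    (hIint : IntegrableOn (fun z => z⁻¹ * f z) (Set.Ioi 0))
    (hIpos : 0 < ∫ z in Set.Ioi 0, z⁻¹ * f z) :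
    Real.log (1 + S / ∫ z in Set.Ioi 0, z⁻¹ * f z) ≤ C_CTCI f S t := by
  set I : ℝ := ∫ z in Set.Ioi 0, z⁻¹ * f z with hIdef
  have hG := Gv_pos f hf_meas hf_nonneg hf_int hf_one ht
  have hD : 0 < (Gv f t)⁻¹ := inv_pos.mpr hG
  have hc₀ : 0 < I⁻¹ := inv_pos.mpr hIpos
  set zs : ℝ := Gv f t * I⁻¹ with hzsdef
  have hzs : 0 < zs := mul_pos hG hc₀
  have hzc : (Gv f t)⁻¹ * zs = I⁻¹ := by rw [hzsdef]; field_simp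
  have hGtI : Gv f t ≤ t * I := by
    rw [hIdef, ← integral_const_mul]
    unfold Gv
    refine setIntegral_mono_on (Gv_int f hf_meas hf_nonneg hf_int ht)
      (hIint.const_mul t) measurableSet_Ioi fun z hz => ?_
    have hz' : (0:ℝ) < z := hz
    show min z t / z * f z ≤ t * (z⁻¹ * f z)
    rw [div_eq_mul_inv]
    have h1 : min z t * z⁻¹ ≤ t * z⁻¹ :=
      mul_le_mul_of_nonneg_right (min_le_right z t) (by positivity)
    calc min z t * z⁻¹ * f z ≤ t * z⁻¹ * f z :=
          mul_le_mul_of_nonneg_right h1 (hf_nonneg z)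
      _ = t * (z⁻¹ * f z) := by ring
  have hzst : zs ≤ t := by
    have h1 : zs * I = Gv f t := by rw [hzsdef]; field_simp
    nlinarith
  have hconst : ∫ z in Set.Ioi 0, Real.log (1 + S * I⁻¹) * f z = Real.log (1 + S * I⁻¹) := by
    rw [integral_const_mul, hf_one, mul_one]
  rw [div_eq_mul_inv, C_eq f hf_meas hf_nonneg hf_int hf_one hS.le ht, ← hconst]
  refine core_le f hf_nonneg hS hzs hc₀.le
    (fun _ => I⁻¹) (fun z => (Gv f t)⁻¹ * min z t)
    ?_ ?_ ?_ ?_ ?_ ?_ ?_ ?_ ?_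
  · intro z _; exact hc₀.le
  · intro z hz
    have hz' : (0:ℝ) < z := hz
    exact mul_nonneg hD.le (le_min hz'.le ht.le)
  · intro z hz hzzs
    have hz' : (0:ℝ) < z := hz
    have hmin : min z t = z := min_eq_left (le_trans hzzs hzst)
    constructor
    · show (Gv f t)⁻¹ * min z t ≤ I⁻¹
      rw [hmin, ← hzc]
      exact mul_le_mul_of_nonneg_left hzzs hD.le
    · show z * (1 + S * I⁻¹) ≤ zs * (1 + S * ((Gv f t)⁻¹ * min z t))
      rw [hmin, ← hzc]
      nlinarith
  · intro z hz hzsz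
    have hz' : (0:ℝ) < z := hz
    constructor
    · show I⁻¹ ≤ (Gv f t)⁻¹ * min z t
      rw [← hzc]
      exact mul_le_mul_of_nonneg_left (le_min hzsz hzst) hD.le
    · show zs * (1 + S * ((Gv f t)⁻¹ * min z t)) ≤ z * (1 + S * I⁻¹)
      rw [← hzc]
      have hmz : min z t ≤ z := min_le_left z t
      have h3 : zs * min z t ≤ zs * z := mul_le_mul_of_nonneg_left hmz hzs.le
      have h4 : S * (Gv f t)⁻¹ * (zs * min z t) ≤ S * (Gv f t)⁻¹ * (zs * z) :=
        mul_le_mul_of_nonneg_left h3 (mul_nonneg hS.le hD.le)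
      nlinarith [h4, hzsz]
  · have e : (fun z => (fun _ : ℝ => I⁻¹) z / z * f z) = fun z => I⁻¹ * (z⁻¹ * f z) := by
      funext z; simp only; ring
    rw [e]
    exact hIint.const_mul I⁻¹
  · exact EX_int f hf_meas hf_nonneg hf_int ht
  · have e : (fun z => (fun _ : ℝ => I⁻¹) z / z * f z) = fun z => I⁻¹ * (z⁻¹ * f z) := by
      funext z; simp only; ring
    rw [e, integral_const_mul, EX_eq f hf_meas hf_nonneg hf_int hf_one ht]
    exact inv_mul_cancel₀ hIpos.ne'
  · exact hf_int.const_mul _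
  · exact log_int f hf_meas hf_nonneg hf_int hS.le hD.le ht
private lemma ctci_ra (f : ℝ → ℝ) (hf_meas : Measurable f) (hf_nonneg : ∀ z, 0 ≤ f z)
    (hf_int : IntegrableOn f (Set.Ioi 0)) (hf_one : ∫ z in Set.Ioi 0, f z = 1)
    {S t : ℝ} (hS : 0 < S) (ht : 0 < t) :
    ENNReal.ofReal (C_CTCI f S t)
      ≤ ∫⁻ z in Set.Ioi 0, ENNReal.ofReal (Real.log (1 + S * z) * f z) := by
  by_cases htop : (∫⁻ z in Set.Ioi 0, ENNReal.ofReal (Real.log (1 + S * z) * f z)) = ⊤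
  · rw [htop]; exact le_top
  have hG := Gv_pos f hf_meas hf_nonneg hf_int hf_one ht
  have hGle1 := Gv_le_one f hf_meas hf_nonneg hf_int hf_one ht
  have hD : 0 < (Gv f t)⁻¹ := inv_pos.mpr hG
  have hD1 : 1 ≤ (Gv f t)⁻¹ := (one_le_inv₀ hG).mpr hGle1
  set zs : ℝ := (Gv f t)⁻¹ * t with hzsdef
  have hzs : 0 < zs := mul_pos hD ht
  have htzs : t ≤ zs := by
    rw [hzsdef]; nlinarith
  set A : ℝ → ℝ := fun z => Real.log (1 + S * z) * f z with hA
  have hAmeas : Measurable A :=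
    (Real.measurable_log.comp ((measurable_id.const_mul S).const_add 1)).mul hf_meas
  have hAnn : ∀ z ∈ Set.Ioi 0, 0 ≤ A z := by
    intro z hz
    have hz' : (0:ℝ) < z := hz
    exact mul_nonneg (Real.log_nonneg (by nlinarith)) (hf_nonneg z)
  have hAae : 0 ≤ᵐ[volume.restrict (Set.Ioi 0)] A :=
    (ae_restrict_iff' measurableSet_Ioi).mpr (Filter.Eventually.of_forall hAnn)
  have hAint : IntegrableOn A (Set.Ioi 0) := by
    refine ⟨hAmeas.aestronglyMeasurable, ?_⟩
    rw [hasFiniteIntegral_iff_ofReal hAae]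
    exact lt_top_iff_ne_top.mpr htop
  have hBint := log_int f hf_meas hf_nonneg hf_int hS.le hD.le ht (S := S) (D := (Gv f t)⁻¹)
  have hXint := EX_int f hf_meas hf_nonneg hf_int ht (D := (Gv f t)⁻¹)
  set L : ℝ := S * zs / (1 + S * zs) with hL
  set g : ℝ → ℝ := fun z => L * (f z - ((Gv f t)⁻¹ * min z t) / z * f z) with hg
  have hgint : IntegrableOn g (Set.Ioi 0) := (hf_int.sub hXint).const_mul L
  have hgzero : ∫ z in Set.Ioi 0, g z = 0 := by
    simp only [hg]
    rw [integral_const_mul, integral_sub hf_int hXint, hf_one,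
      EX_eq f hf_meas hf_nonneg hf_int hf_one ht, sub_self, mul_zero]
  have hpt : ∀ z ∈ Set.Ioi 0,
      (fun z => Real.log (1 + S * ((Gv f t)⁻¹ * min z t)) * f z + g z) z ≤ A z := by
    intro z hz
    have hz' : (0:ℝ) < z := hz
    have hy0 : 0 ≤ (Gv f t)⁻¹ * min z t := mul_nonneg hD.le (le_min hz'.le ht.le)
    have key := pt_ineq (x := z) (y := (Gv f t)⁻¹ * min z t) (c := zs) (zs := zs)
      hS hzs.le hz' hzs hz'.le hy0 ?_ ?_
    · have hmul := mul_le_mul_of_nonneg_right key (hf_nonneg z)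
      have e : (z - (Gv f t)⁻¹ * min z t) / z * f z
          = f z - ((Gv f t)⁻¹ * min z t) / z * f z := by
        rw [sub_div, div_self hz'.ne']; ring
      have e2 : S * zs / (1 + S * zs) * ((z - (Gv f t)⁻¹ * min z t) / z) * f z
          = L * ((z - (Gv f t)⁻¹ * min z t) / z * f z) := by rw [hL]; ring
      rw [e2, e] at hmul
      have e3 : (Real.log (1 + S * z) - Real.log (1 + S * ((Gv f t)⁻¹ * min z t))) * f z
          = A z - Real.log (1 + S * ((Gv f t)⁻¹ * min z t)) * f z := by
        simp only [hA]; ring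
      rw [e3] at hmul
      simp only [hg]
      linarith
    · intro hzzs
      constructor
      · rcases le_total z t with h | h
        · rw [min_eq_left h]
          nlinarith
        · rw [min_eq_right h]
          exact le_trans hzzs le_rfl
      · nlinarith
    · intro hzsz
      constructor
      · have hmt : min z t = t := min_eq_right (le_trans htzs hzsz)
        rw [hmt]
        exact le_trans (le_of_eq hzsdef.symm) hzsz
      · nlinarith
  have hsum : IntegrableOn
      (fun z => Real.log (1 + S * ((Gv f t)⁻¹ * min z t)) * f z + g z) (Set.Ioi 0) :=
    hBint.add hgint
  have hle := setIntegral_mono_on hsum hAint measurableSet_Ioi hpt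
  rw [integral_add hBint hgint, hgzero, add_zero] at hle
  rw [C_eq f hf_meas hf_nonneg hf_int hf_one hS.le ht]
  calc ENNReal.ofReal (∫ z in Set.Ioi 0, Real.log (1 + S * ((Gv f t)⁻¹ * min z t)) * f z)
      ≤ ENNReal.ofReal (∫ z in Set.Ioi 0, A z) := ENNReal.ofReal_le_ofReal hle
    _ = ∫⁻ z in Set.Ioi 0, ENNReal.ofReal (A z) :=
        ofReal_integral_eq_lintegral_ofReal hAint hAae

/-- **Monotonicity of CTCI capacity in the threshold.** For a density `f` on `(0,∞)` and any
fixed `S > 0`, the CTCI capacity is nondecreasing in the threshold, strictly increasing between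
thresholds `t₁ < t₂` with `F(t₁) > 0` and `F(t₂) < 1`; consequently for every `S > 0` and
every threshold `t > 0` the CTCI capacity lies between the channel-inversion capacity
`log(1 + S/E[Z⁻¹])` (assuming `0 < E[Z⁻¹] < ∞`) and the rate-adaptation capacity
`E[log(1 + S·Z)]` (possibly `+∞`, stated via the lower Lebesgue integral). -/
theorem ctci_capacity_monotone_in_threshold
    (f : ℝ → ℝ) (hf_meas : Measurable f) (hf_nonneg : ∀ z, 0 ≤ f z)
    (hf_supp : ∀ z ≤ 0, f z = 0)
    (hf_int : IntegrableOn f (Set.Ioi 0))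
    (hf_one : ∫ z in Set.Ioi 0, f z = 1) :
    (∀ S, 0 < S → ∀ t₁ t₂, 0 < t₁ → t₁ ≤ t₂ → C_CTCI f S t₁ ≤ C_CTCI f S t₂) ∧
    (∀ S, 0 < S → ∀ t₁ t₂, 0 < t₁ → t₁ < t₂ → 0 < cdfOf f t₁ → cdfOf f t₂ < 1 →
      C_CTCI f S t₁ < C_CTCI f S t₂) ∧
    (∀ S, 0 < S → ∀ t, 0 < t →
      (IntegrableOn (fun z => z⁻¹ * f z) (Set.Ioi 0) →
        0 < ∫ z in Set.Ioi 0, z⁻¹ * f z →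
        Real.log (1 + S / ∫ z in Set.Ioi 0, z⁻¹ * f z) ≤ C_CTCI f S t) ∧
      ENNReal.ofReal (C_CTCI f S t) ≤
        ∫⁻ z in Set.Ioi 0, ENNReal.ofReal (Real.log (1 + S * z) * f z)) := by
  refine ⟨?_, ?_, ?_⟩
  · intro S hS t₁ t₂ ht₁ h12
    exact ctci_mono f hf_meas hf_nonneg hf_int hf_one hS ht₁ h12
  · intro S hS t₁ t₂ ht₁ h12 h1 h2
    exact ctci_strict f hf_meas hf_nonneg hf_int hf_one hS ht₁ h12 h1 h2
  · intro S hS t ht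
    exact ⟨fun hIint hIpos =>
        ctci_ci f hf_meas hf_nonneg hf_int hf_one hS ht hIint hIpos,
      ctci_ra f hf_meas hf_nonneg hf_int hf_one hS ht⟩
end

section
/- Let D : ℝ → ℝ be measurable with D ≥ 0, and let Z be a random variable with 𝔓(Z > 0) = 1 such that E[log(1 + D(Z)·Z)] < ∞. Then the map C : S ↦ E[log(1 + S·D(Z)·Z)] is differentiable on (0,∞) with S·C′(S) = E[(S·D(Z)·Z)/(1 + S·D(Z)·Z)], and E[(S·D(Z)·Z)/(1 + S·D(Z)·Z)] → 1 − 𝔓(D(Z) = 0) as S → ∞. In other words, the high-SNR pre-log constant of the scheme with power ratio D equals one minus the probability of outage. -/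
/-!
With `X = D(Z)·Z ≥ 0` a.s., the integrand `log (1 + S X)` has `S`-derivative `X / (1 + S X)`,
which is bounded by `1 / S`; a bound uniform near any `S₀ > 0` lets us differentiate under the
integral. Since `S X / (1 + S X) ∈ [0, 1]` tends to `1` where `X > 0` and vanishes where `X = 0`,
dominated convergence gives the limit `P(X ≠ 0) = 1 - P(D(Z) = 0)`.
-/

open MeasureTheory Filter Topology

section Pointwise

variable {x S : ℝ}

lemma hasDerivAt_log_one_add_mul (h : 1 + S * x ≠ 0) :
    HasDerivAt (fun S : ℝ => Real.log (1 + S * x)) (x / (1 + S * x)) S := by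
  simpa using ((hasDerivAt_mul_const x).const_add (1 : ℝ)).log h

lemma div_one_add_mul_le_inv (hx : 0 ≤ x) (hS : 0 < S) : x / (1 + S * x) ≤ S⁻¹ := by
  rw [div_le_iff₀ (by positivity), inv_mul_eq_div, le_div_iff₀ hS]
  linarith

lemma log_one_add_mul_le (hx : 0 ≤ x) (hS : 0 < S) :
    Real.log (1 + S * x) ≤ Real.log (1 + x) + |Real.log S| := by
  rcases le_total S 1 with h | h
  · have : Real.log (1 + S * x) ≤ Real.log (1 + x) :=
      Real.log_le_log (by positivity) (by nlinarith)
    linarith [abs_nonneg (Real.log S)]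
  · have : Real.log (1 + S * x) ≤ Real.log (S * (1 + x)) :=
      Real.log_le_log (by positivity) (by nlinarith)
    rw [Real.log_mul hS.ne' (by positivity)] at this
    linarith [le_abs_self (Real.log S)]

lemma tendsto_mul_div_one_add_mul_atTop (hx : 0 < x) :
    Tendsto (fun S : ℝ => S * x / (1 + S * x)) atTop (𝓝 1) := by
  have hden : Tendsto (fun S : ℝ => 1 + S * x) atTop atTop :=
    tendsto_atTop_add_const_left _ _ (tendsto_id.atTop_mul_const hx)
  have hlim : Tendsto (fun S : ℝ => 1 - (1 + S * x)⁻¹) atTop (𝓝 1) := by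
    simpa using tendsto_const_nhds.sub hden.inv_tendsto_atTop
  refine hlim.congr' ?_
  filter_upwards [eventually_ge_atTop 0] with S hS
  have : 0 < 1 + S * x := by positivity
  field_simp
  ring

end Pointwise

section Integral

variable {Ω : Type*} [MeasurableSpace Ω] {μ : Measure Ω} {X : Ω → ℝ}

lemma integrable_log_one_add_mul [IsFiniteMeasure μ] (hX : AEMeasurable X μ)
    (hX_nonneg : ∀ᵐ ω ∂μ, 0 ≤ X ω) (h_int : Integrable (fun ω => Real.log (1 + X ω)) μ) {S : ℝ}
    (hS : 0 < S) : Integrable (fun ω => Real.log (1 + S * X ω)) μ := by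
  refine (h_int.add (integrable_const |Real.log S|)).mono'
    (Real.measurable_log.comp_aemeasurable ((hX.const_mul S).const_add 1)).aestronglyMeasurable ?_
  filter_upwards [hX_nonneg] with ω hω
  rw [Real.norm_of_nonneg (Real.log_nonneg (le_add_of_nonneg_right (by positivity)))]
  exact log_one_add_mul_le hω hS

lemma hasDerivAt_integral_log_one_add_mul [IsFiniteMeasure μ] (hX : AEMeasurable X μ)
    (hX_nonneg : ∀ᵐ ω ∂μ, 0 ≤ X ω) (h_int : Integrable (fun ω => Real.log (1 + X ω)) μ) {S₀ : ℝ}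
    (hS₀ : 0 < S₀) :
    HasDerivAt (fun S => ∫ ω, Real.log (1 + S * X ω) ∂μ)
      (∫ ω, X ω / (1 + S₀ * X ω) ∂μ) S₀ := by
  have hnhds : Set.Ioi (S₀ / 2) ∈ 𝓝 S₀ := Ioi_mem_nhds (by linarith)
  have hbound : ∀ᵐ ω ∂μ, ∀ S ∈ Set.Ioi (S₀ / 2), ‖X ω / (1 + S * X ω)‖ ≤ (S₀ / 2)⁻¹ := by
    filter_upwards [hX_nonneg] with ω hω S (hS : S₀ / 2 < S)
    have hS_pos : 0 < S := by linarith
    rw [Real.norm_of_nonneg (by positivity)]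
    exact (div_one_add_mul_le_inv hω hS_pos).trans (inv_anti₀ (by positivity) hS.le)
  have hdiff : ∀ᵐ ω ∂μ, ∀ S ∈ Set.Ioi (S₀ / 2),
      HasDerivAt (fun S => Real.log (1 + S * X ω)) (X ω / (1 + S * X ω)) S := by
    filter_upwards [hX_nonneg] with ω hω S (hS : S₀ / 2 < S)
    have hS_pos : 0 < S := by linarith
    exact hasDerivAt_log_one_add_mul (by positivity)
  refine (hasDerivAt_integral_of_dominated_loc_of_deriv_le hnhds ?_
    (integrable_log_one_add_mul hX hX_nonneg h_int hS₀) ?_ hbound (integrable_const _) hdiff).2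
  · exact .of_forall fun S =>
      (Real.measurable_log.comp_aemeasurable ((hX.const_mul S).const_add 1)).aestronglyMeasurable
  · exact (hX.div ((hX.const_mul S₀).const_add 1)).aestronglyMeasurable

lemma tendsto_integral_mul_div_one_add_mul_atTop [IsFiniteMeasure μ] (hX : AEMeasurable X μ)
    (hX_nonneg : ∀ᵐ ω ∂μ, 0 ≤ X ω) :
    Tendsto (fun S => ∫ ω, S * X ω / (1 + S * X ω) ∂μ) atTop (𝓝 (μ.real {ω | X ω ≠ 0})) := by
  have hset : NullMeasurableSet {ω | X ω ≠ 0} μ :=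
    hX.nullMeasurable (measurableSet_singleton 0).compl
  have hlim : ∫ ω, {ω | X ω ≠ 0}.indicator 1 ω ∂μ = μ.real {ω | X ω ≠ 0} := by
    simp [integral_indicator₀ hset]
  rw [← hlim]
  refine tendsto_integral_filter_of_dominated_convergence (fun _ => 1)
    (.of_forall fun S => ((hX.const_mul S).div ((hX.const_mul S).const_add 1)).aestronglyMeasurable)
    ?_ (integrable_const _) ?_
  · filter_upwards [eventually_ge_atTop 0] with S hS
    filter_upwards [hX_nonneg] with ω hω
    have hSX : 0 ≤ S * X ω := by positivity
    rw [Real.norm_of_nonneg (by positivity), div_le_one (by positivity)]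
    linarith
  · filter_upwards [hX_nonneg] with ω hω
    rcases hω.eq_or_lt with h0 | hpos
    · simp [← h0]
    · simpa [hpos.ne'] using tendsto_mul_div_one_add_mul_atTop hpos

end Integral

/-- **The pre-log constant equals one minus the outage probability.** Let `D ≥ 0` be a
measurable power-ratio function and `Z` a channel gain with `P(Z > 0) = 1` such that
`E[log(1 + D(Z)·Z)] < ∞` (i.e. the a.s. nonnegative integrand is integrable). Then the
capacity `C(S) = E[log(1 + S·D(Z)·Z)]` is differentiable on `(0,∞)` with
`S·C′(S) = E[(S·D(Z)·Z)/(1 + S·D(Z)·Z)]`, and this quantity tends to `1 − P(D(Z) = 0)` as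
`S → ∞`. -/
theorem prelog_eq_one_sub_outage
    {Ω : Type*} [MeasurableSpace Ω] (P : Measure Ω) [IsProbabilityMeasure P]
    (Z : Ω → ℝ) (hZ : Measurable Z) (hZpos : P {ω | 0 < Z ω} = 1)
    (D : ℝ → ℝ) (hD_meas : Measurable D) (hD_nonneg : ∀ z, 0 ≤ D z)
    (h_int : Integrable (fun ω => Real.log (1 + D (Z ω) * Z ω)) P) :
    (∀ S, 0 < S →
      HasDerivAt (fun S => ∫ ω, Real.log (1 + S * D (Z ω) * Z ω) ∂P)
        ((∫ ω, (S * D (Z ω) * Z ω) / (1 + S * D (Z ω) * Z ω) ∂P) / S) S) ∧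
    Tendsto (fun S => ∫ ω, (S * D (Z ω) * Z ω) / (1 + S * D (Z ω) * Z ω) ∂P)
      atTop (𝓝 (1 - (P {ω | D (Z ω) = 0}).toReal)) := by
  have hX : AEMeasurable (fun ω => D (Z ω) * Z ω) P := ((hD_meas.comp hZ).mul hZ).aemeasurable
  have hZ_ae : ∀ᵐ ω ∂P, 0 < Z ω :=
    (ae_iff_measure_eq (measurableSet_lt measurable_const hZ).nullMeasurableSet).2
      (by rwa [measure_univ])
  have hX_nonneg : ∀ᵐ ω ∂P, 0 ≤ D (Z ω) * Z ω :=
    hZ_ae.mono fun ω h => mul_nonneg (hD_nonneg _) h.le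
  have houtage : P.real {ω | D (Z ω) * Z ω ≠ 0} = 1 - (P {ω | D (Z ω) = 0}).toReal := by
    have hsupport : {ω | D (Z ω) * Z ω ≠ 0} =ᵐ[P] ({ω | D (Z ω) = 0}ᶜ : Set Ω) := by
      filter_upwards [hZ_ae] with ω hω
      change (ω ∈ {ω | D (Z ω) * Z ω ≠ 0}) = (ω ∈ ({ω | D (Z ω) = 0}ᶜ : Set Ω))
      simp [hω.ne']
    have houtage_meas : MeasurableSet {ω | D (Z ω) = 0} :=
      measurableSet_eq_fun (hD_meas.comp hZ) measurable_const
    rw [measureReal_congr hsupport, probReal_compl_eq_one_sub houtage_meas, measureReal_def]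
  refine ⟨fun S hS => ?_, ?_⟩
  · convert hasDerivAt_integral_log_one_add_mul hX hX_nonneg h_int hS using 1
    · simp only [mul_assoc]
    · rw [← integral_div]
      congr 1 with ω
      field_simp
  · simpa only [mul_assoc, houtage] using tendsto_integral_mul_div_one_add_mul_atTop hX hX_nonneg
end

section
/- Let Z satisfy 𝔓(Z > 0) = 1, 0 < E[Z] < ∞ and E[|log Z|] < ∞, and let g : (0,∞) → (0,∞) satisfy the optimal power-adaptation constraint E[(1/g(S) − 1/Z)·1{Z > g(S)}] = S for every S > 0. Then C_OA(S) − C_RA(S) → 0 as S → ∞, where C_OA(S) = E[log(Z/g(S))·1{Z > g(S)}] and C_RA(S) = E[log(1 + S·Z)]. That is, rate adaptation with constant power is asymptotically optimal at high average SNR. -/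
open MeasureTheory Filter Topology Real Set

/-!
Write `t = g S`. Multiplying the power constraint by `t` gives `t * S = 1 - E[min 1 (t / Z)]`,
so `t ≤ 1 / S → 0` and then, by dominated convergence, `t * S → 1`. Since
`log⁺ (Z / t) = log Z - log t + log⁺ (t / Z)` and
`log (1 + S * Z) = log S + log Z + log (1 + S⁻¹ / Z)`, the terms `E[log Z]` cancel and
`C_OA(S) - C_RA(S) = E[log⁺ (t / Z)] - E[log (1 + S⁻¹ / Z)] - log (t * S)`.
Both expectations tend to `0` by dominated convergence: for `t ≤ 1` the integrands are dominated
by their values at `t = 1`, which are integrable because `log Z` is.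
-/

section Pointwise

variable {t z : ℝ}

lemma ite_lt_log_div_eq (ht : 0 < t) (hz : 0 < z) :
    (if t < z then log (z / t) else 0) = log z - log t + log⁺ (t / z) := by
  rw [posLog_apply, log_div ht.ne' hz.ne']
  split_ifs with h
  · rw [log_div hz.ne' ht.ne', max_eq_left (by linarith [log_lt_log ht h])]
    ring
  · rw [max_eq_right (by linarith [log_le_log hz (not_lt.1 h)])]
    ring

lemma log_one_add_mul_eq {S : ℝ} (hS : 0 < S) (hz : 0 < z) :
    log (1 + S * z) = log S + log z + log (1 + S⁻¹ / z) := by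
  rw [← log_mul hS.ne' hz.ne', ← log_mul (by positivity) (by positivity)]
  congr 1
  field_simp
  ring

lemma mul_ite_lt_inv_sub_inv (ht : 0 < t) (hz : 0 < z) :
    t * (if t < z then t⁻¹ - z⁻¹ else 0) = 1 - min 1 (t / z) := by
  split_ifs with h
  · rw [min_eq_right ((div_le_one hz).2 h.le)]
    field_simp
  · rw [min_eq_left ((one_le_div hz).2 (not_lt.1 h))]
    ring

lemma abs_posLog_div_le (t z : ℝ) : |log⁺ (t / z)| ≤ log⁺ t + |log z| := by
  rw [abs_of_nonneg posLog_nonneg, div_eq_mul_inv]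
  refine posLog_mul.trans (add_le_add le_rfl ?_)
  rw [posLog_apply, log_inv]
  exact max_le (abs_nonneg _) (neg_le_abs _)

lemma abs_log_one_add_le (hz : 0 ≤ z) : |log (1 + z)| ≤ log 2 + log⁺ z := by
  rw [abs_of_nonneg (log_nonneg (by linarith)),
    ← posLog_eq_log (by rw [abs_of_nonneg] <;> linarith)]
  simpa using posLog_add (x := 1) (y := z)

end Pointwise

section Integrals

variable {Ω : Type*} [MeasurableSpace Ω] {μ : Measure Ω} {Z : Ω → ℝ}

lemma integrable_posLog_div [IsFiniteMeasure μ] (hZ : Measurable Z)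
    (hlog : Integrable (fun ω => log (Z ω)) μ) (t : ℝ) :
    Integrable (fun ω => log⁺ (t / Z ω)) μ :=
  ((integrable_const _).add hlog.abs).mono'
    (continuous_posLog.measurable.comp (measurable_const.div hZ)).aestronglyMeasurable
    (ae_of_all _ fun ω => abs_posLog_div_le t (Z ω))

lemma integrable_log_one_add_div [IsFiniteMeasure μ] (hZ : Measurable Z)
    (hZpos : ∀ᵐ ω ∂μ, 0 < Z ω) (hlog : Integrable (fun ω => log (Z ω)) μ) {t : ℝ}
    (ht : 0 ≤ t) : Integrable (fun ω => log (1 + t / Z ω)) μ :=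
  ((integrable_const _).add (integrable_posLog_div hZ hlog t)).mono'
    (measurable_log.comp (measurable_const.add (measurable_const.div hZ))).aestronglyMeasurable
    (hZpos.mono fun _ hω => abs_log_one_add_le (div_nonneg ht hω.le))

lemma integrable_min_one_div [IsFiniteMeasure μ] (hZ : Measurable Z)
    (hZpos : ∀ᵐ ω ∂μ, 0 < Z ω) {t : ℝ} (ht : 0 ≤ t) :
    Integrable (fun ω => min 1 (t / Z ω)) μ :=
  .of_bound (measurable_const.min (measurable_const.div hZ)).aestronglyMeasurable 1
    (hZpos.mono fun _ hω => by
      rw [norm_of_nonneg (le_min zero_le_one (div_nonneg ht hω.le))]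
      exact min_le_left _ _)

lemma tendsto_integral_comp_div {ι : Type*} {l : Filter ι} [l.IsCountablyGenerated]
    {φ : ℝ → ℝ} (hφm : Measurable φ) (hφc : ContinuousAt φ 0) (hφ0 : φ 0 = 0)
    (hφmono : MonotoneOn φ (Ici 0)) (hZ : Measurable Z) (hZpos : ∀ᵐ ω ∂μ, 0 < Z ω)
    (hint : Integrable (fun ω => φ (1 / Z ω)) μ) {t : ι → ℝ}
    (ht0 : ∀ᶠ i in l, 0 ≤ t i) (ht : Tendsto t l (𝓝 0)) :
    Tendsto (fun i => ∫ ω, φ (t i / Z ω) ∂μ) l (𝓝 0) := by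
  have hdom : ∀ᶠ i in l, ∀ᵐ ω ∂μ, ‖φ (t i / Z ω)‖ ≤ φ (1 / Z ω) := by
    filter_upwards [ht0, ht.eventually (ge_mem_nhds one_pos)] with i hti0 hti1
    filter_upwards [hZpos] with ω hω
    have h0 : 0 ≤ t i / Z ω := div_nonneg hti0 hω.le
    have h1 : t i / Z ω ≤ 1 / Z ω := div_le_div_of_nonneg_right hti1 hω.le
    rw [norm_of_nonneg (hφ0 ▸ hφmono self_mem_Ici h0 h0)]
    exact hφmono h0 (h0.trans h1) h1
  have hlim : ∀ᵐ ω ∂μ, Tendsto (fun i => φ (t i / Z ω)) l (𝓝 0) := by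
    refine .of_forall fun ω => ?_
    have hquot := ht.div_const (Z ω)
    rw [zero_div] at hquot
    rw [← hφ0]
    exact hφc.tendsto.comp hquot
  simpa using tendsto_integral_filter_of_dominated_convergence _
    (.of_forall fun _ => (hφm.comp (measurable_const.div hZ)).aestronglyMeasurable)
    hdom hint hlim

variable [IsFiniteMeasure μ] {ι : Type*} {l : Filter ι} [l.IsCountablyGenerated] {t : ι → ℝ}

lemma tendsto_integral_min_one_div (hZ : Measurable Z) (hZpos : ∀ᵐ ω ∂μ, 0 < Z ω)
    (ht0 : ∀ᶠ i in l, 0 ≤ t i) (ht : Tendsto t l (𝓝 0)) :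
    Tendsto (fun i => ∫ ω, min 1 (t i / Z ω) ∂μ) l (𝓝 0) :=
  tendsto_integral_comp_div (measurable_const.min measurable_id)
    (continuous_const.min continuous_id).continuousAt (by simp)
    (fun _ _ _ _ h => min_le_min_left 1 h)
    hZ hZpos (integrable_min_one_div hZ hZpos zero_le_one) ht0 ht

lemma tendsto_integral_posLog_div (hZ : Measurable Z) (hZpos : ∀ᵐ ω ∂μ, 0 < Z ω)
    (hlog : Integrable (fun ω => log (Z ω)) μ) (ht0 : ∀ᶠ i in l, 0 ≤ t i)
    (ht : Tendsto t l (𝓝 0)) :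
    Tendsto (fun i => ∫ ω, log⁺ (t i / Z ω) ∂μ) l (𝓝 0) :=
  tendsto_integral_comp_div continuous_posLog.measurable continuous_posLog.continuousAt
    posLog_zero (fun _ ha _ _ h => posLog_le_posLog ha h) hZ hZpos
    (integrable_posLog_div hZ hlog 1) ht0 ht

lemma tendsto_integral_log_one_add_div (hZ : Measurable Z) (hZpos : ∀ᵐ ω ∂μ, 0 < Z ω)
    (hlog : Integrable (fun ω => log (Z ω)) μ) (ht0 : ∀ᶠ i in l, 0 ≤ t i)
    (ht : Tendsto t l (𝓝 0)) :
    Tendsto (fun i => ∫ ω, log (1 + t i / Z ω) ∂μ) l (𝓝 0) :=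
  tendsto_integral_comp_div (φ := fun x => log (1 + x))
    (measurable_log.comp (measurable_const.add measurable_id))
    ((continuousAt_const.add continuousAt_id).log (by norm_num)) (by simp)
    (fun _ ha _ _ h => log_le_log (by linarith [mem_Ici.1 ha]) (by linarith)) hZ hZpos
    (integrable_log_one_add_div hZ hZpos hlog zero_le_one) ht0 ht

end Integrals

section Expectations

variable {Ω : Type*} [MeasurableSpace Ω] {μ : Measure Ω} [IsProbabilityMeasure μ]
  {Z : Ω → ℝ} {g : ℝ → ℝ}

lemma integral_ite_lt_log_div (hZ : Measurable Z) (hZpos : ∀ᵐ ω ∂μ, 0 < Z ω)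
    (hlog : Integrable (fun ω => log (Z ω)) μ) {t : ℝ} (ht : 0 < t) :
    ∫ ω, (if t < Z ω then log (Z ω / t) else 0) ∂μ
      = ∫ ω, log (Z ω) ∂μ - log t + ∫ ω, log⁺ (t / Z ω) ∂μ := by
  rw [integral_congr_ae (hZpos.mono fun ω hω => ite_lt_log_div_eq ht hω),
    integral_add (f := fun ω => log (Z ω) - log t) (hlog.sub (integrable_const _))
      (integrable_posLog_div hZ hlog t),
    integral_sub hlog (integrable_const _), integral_const, probReal_univ, one_smul]

lemma integral_log_one_add_mul (hZ : Measurable Z) (hZpos : ∀ᵐ ω ∂μ, 0 < Z ω)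
    (hlog : Integrable (fun ω => log (Z ω)) μ) {S : ℝ} (hS : 0 < S) :
    ∫ ω, log (1 + S * Z ω) ∂μ
      = log S + ∫ ω, log (Z ω) ∂μ + ∫ ω, log (1 + S⁻¹ / Z ω) ∂μ := by
  rw [integral_congr_ae (hZpos.mono fun ω hω => log_one_add_mul_eq hS hω),
    integral_add (f := fun ω => log S + log (Z ω)) ((integrable_const _).add hlog)
      (integrable_log_one_add_div hZ hZpos hlog (inv_nonneg.2 hS.le)),
    integral_add (integrable_const _) hlog, integral_const, probReal_univ, one_smul]

lemma mul_integral_ite_lt_inv_sub_inv (hZ : Measurable Z) (hZpos : ∀ᵐ ω ∂μ, 0 < Z ω)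
    {t : ℝ} (ht : 0 < t) :
    t * ∫ ω, (if t < Z ω then t⁻¹ - (Z ω)⁻¹ else 0) ∂μ
      = 1 - ∫ ω, min 1 (t / Z ω) ∂μ := by
  rw [← integral_const_mul,
    integral_congr_ae (hZpos.mono fun ω hω => mul_ite_lt_inv_sub_inv ht hω),
    integral_sub (integrable_const _) (integrable_min_one_div hZ hZpos ht.le), integral_const,
    probReal_univ, one_smul]


lemma threshold_mul_eq (hZ : Measurable Z) (hZpos : ∀ᵐ ω ∂μ, 0 < Z ω) {S : ℝ}
    (hgS : 0 < g S) (hg : ∫ ω, (if g S < Z ω then (g S)⁻¹ - (Z ω)⁻¹ else 0) ∂μ = S) :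
    g S * S = 1 - ∫ ω, min 1 (g S / Z ω) ∂μ := by
  simpa only [hg] using mul_integral_ite_lt_inv_sub_inv hZ hZpos hgS

lemma threshold_le_inv (hZ : Measurable Z) (hZpos : ∀ᵐ ω ∂μ, 0 < Z ω) {S : ℝ} (hS : 0 < S)
    (hgS : 0 < g S) (hg : ∫ ω, (if g S < Z ω then (g S)⁻¹ - (Z ω)⁻¹ else 0) ∂μ = S) :
    g S ≤ S⁻¹ := by
  have hmin : 0 ≤ ∫ ω, min 1 (g S / Z ω) ∂μ := integral_nonneg_of_ae <|
    hZpos.mono fun _ hω => le_min zero_le_one (div_nonneg hgS.le hω.le)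
  rw [← one_div, le_div_iff₀ hS, threshold_mul_eq hZ hZpos hgS hg]
  linarith

lemma tendsto_threshold_atTop (hZ : Measurable Z) (hZpos : ∀ᵐ ω ∂μ, 0 < Z ω)
    (hgpos : ∀ S, 0 < S → 0 < g S)
    (hg : ∀ S, 0 < S → ∫ ω, (if g S < Z ω then (g S)⁻¹ - (Z ω)⁻¹ else 0) ∂μ = S) :
    Tendsto g atTop (𝓝 0) :=
  tendsto_of_tendsto_of_tendsto_of_le_of_le' tendsto_const_nhds tendsto_inv_atTop_zero
    ((eventually_gt_atTop 0).mono fun S hS => (hgpos S hS).le)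
    ((eventually_gt_atTop 0).mono fun S hS =>
      threshold_le_inv hZ hZpos hS (hgpos S hS) (hg S hS))

lemma tendsto_log_threshold_mul (hZ : Measurable Z) (hZpos : ∀ᵐ ω ∂μ, 0 < Z ω)
    (hgpos : ∀ S, 0 < S → 0 < g S)
    (hg : ∀ S, 0 < S → ∫ ω, (if g S < Z ω then (g S)⁻¹ - (Z ω)⁻¹ else 0) ∂μ = S) :
    Tendsto (fun S => log (g S * S)) atTop (𝓝 0) := by
  have hmin := tendsto_integral_min_one_div hZ hZpos
    ((eventually_gt_atTop 0).mono fun S hS => (hgpos S hS).le)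
    (tendsto_threshold_atTop hZ hZpos hgpos hg)
  have hmul : Tendsto (fun S => g S * S) atTop (𝓝 1) := by
    simpa using (hmin.const_sub 1).congr' <| (eventually_gt_atTop 0).mono fun S hS =>
      (threshold_mul_eq hZ hZpos (hgpos S hS) (hg S hS)).symm
  rw [← log_one]
  exact (continuousAt_log one_ne_zero).tendsto.comp hmul

end Expectations

theorem oa_sub_ra_tendsto_zero_general
    {Ω : Type*} [MeasurableSpace Ω] (P : Measure Ω) [IsProbabilityMeasure P]
    (Z : Ω → ℝ) (hZ : Measurable Z) (hZpos : P {ω | 0 < Z ω} = 1)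
    (hlog_int : Integrable (fun ω => |Real.log (Z ω)|) P)
    (g : ℝ → ℝ) (hgpos : ∀ S, 0 < S → 0 < g S)
    (hg : ∀ S, 0 < S →
      ∫ ω, (if g S < Z ω then (g S)⁻¹ - (Z ω)⁻¹ else 0) ∂P = S) :
    Tendsto (fun S =>
        (∫ ω, (if g S < Z ω then Real.log (Z ω / g S) else 0) ∂P)
          - ∫ ω, Real.log (1 + S * Z ω) ∂P)
      atTop (𝓝 0) := by
  have hZpos' : ∀ᵐ ω ∂P, 0 < Z ω :=
    (mem_ae_iff_prob_eq_one (measurableSet_lt measurable_const hZ)).2 hZpos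
  have hlog : Integrable (fun ω => log (Z ω)) P :=
    (integrable_norm_iff (measurable_log.comp hZ).aestronglyMeasurable).1 hlog_int
  have hg_nonneg : ∀ᶠ S in atTop, 0 ≤ g S :=
    (eventually_gt_atTop 0).mono fun S hS => (hgpos S hS).le
  have hdecomp : ∀ᶠ S in atTop,
      ∫ ω, log⁺ (g S / Z ω) ∂P - ∫ ω, log (1 + S⁻¹ / Z ω) ∂P - log (g S * S)
        = (∫ ω, (if g S < Z ω then log (Z ω / g S) else 0) ∂P)
          - ∫ ω, log (1 + S * Z ω) ∂P := by
    filter_upwards [eventually_gt_atTop 0] with S hS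
    rw [integral_ite_lt_log_div hZ hZpos' hlog (hgpos S hS),
      integral_log_one_add_mul hZ hZpos' hlog hS, log_mul (hgpos S hS).ne' hS.ne']
    ring
  have hinv_nonneg : ∀ᶠ S : ℝ in atTop, 0 ≤ S⁻¹ :=
    (eventually_gt_atTop 0).mono fun _ h => (inv_pos.2 h).le
  simpa using (((tendsto_integral_posLog_div hZ hZpos' hlog hg_nonneg
      (tendsto_threshold_atTop hZ hZpos' hgpos hg)).sub
    (tendsto_integral_log_one_add_div hZ hZpos' hlog hinv_nonneg tendsto_inv_atTop_zero)).sub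
      (tendsto_log_threshold_mul hZ hZpos' hgpos hg)).congr' hdecomp

/-- **Rate adaptation is asymptotically optimal at high SNR.** Let `Z` satisfy `P(Z > 0) = 1`,
`0 < E[Z] < ∞` and `E[|log Z|] < ∞`, and let `g : (0,∞) → (0,∞)` satisfy the optimal
power-adaptation constraint `E[(1/g(S) − 1/Z)·1{Z > g(S)}] = S` for every `S > 0`. Then
`C_OA(S) − C_RA(S) → 0` as `S → ∞`, where `C_OA(S) = E[log(Z/g(S))·1{Z > g(S)}]` and
`C_RA(S) = E[log(1 + S·Z)]`. -/
theorem oa_sub_ra_tendsto_zero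
    {Ω : Type*} [MeasurableSpace Ω] (P : Measure Ω) [IsProbabilityMeasure P]
    (Z : Ω → ℝ) (hZ : Measurable Z) (hZpos : P {ω | 0 < Z ω} = 1)
    (hZ_int : Integrable Z P) (hZ_mean_pos : 0 < ∫ ω, Z ω ∂P)
    (hlog_int : Integrable (fun ω => |Real.log (Z ω)|) P)
    (g : ℝ → ℝ) (hgpos : ∀ S, 0 < S → 0 < g S)
    (hg : ∀ S, 0 < S →
      ∫ ω, (if g S < Z ω then (g S)⁻¹ - (Z ω)⁻¹ else 0) ∂P = S) :
    Tendsto (fun S =>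
        (∫ ω, (if g S < Z ω then Real.log (Z ω / g S) else 0) ∂P)
          - ∫ ω, Real.log (1 + S * Z ω) ∂P)
      atTop (𝓝 0) :=
  oa_sub_ra_tendsto_zero_general P Z hZ hZpos hlog_int g hgpos hg
end

section
/- Let Z satisfy 𝔓(Z > 0) = 1, 0 < E[Z] < ∞ and E[|log Z|] < ∞, suppose Z is not almost surely equal to a constant, and let g : (0,∞) → (0,∞) satisfy the optimal power-adaptation constraint E[(1/g(S) − 1/Z)·1{Z > g(S)}] = S for every S > 0. Then there exists S₀ > 0 such that for all 0 < S < S₀, C_OA(S) > log(1 + S·E[Z]); that is, at sufficiently low average SNR the presence of fading strictly improves the capacity of the optimal power and rate adaptation scheme over the AWGN channel with the same average SNR. -/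
open MeasureTheory Filter Topology

/-- **Fading helps at low SNR.** Let `Z` satisfy `P(Z > 0) = 1`, `0 < E[Z] < ∞` and
`E[|log Z|] < ∞`, suppose `Z` is not a.s. constant, and let `g : (0,∞) → (0,∞)` satisfy the
optimal power-adaptation constraint `E[(1/g(S) − 1/Z)·1{Z > g(S)}] = S` for every `S > 0`.
Then there exists `S₀ > 0` such that for all `0 < S < S₀`,
`C_OA(S) = E[log(Z/g(S))·1{Z > g(S)}] > log(1 + S·E[Z]) = C_AWGN(S)`. -/
theorem oa_beats_awgn_at_low_snr
    {Ω : Type*} [MeasurableSpace Ω] (P : Measure Ω) [IsProbabilityMeasure P]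
    (Z : Ω → ℝ) (hZ : Measurable Z) (hZpos : P {ω | 0 < Z ω} = 1)
    (hZ_int : Integrable Z P) (hZ_mean_pos : 0 < ∫ ω, Z ω ∂P)
    (hlog_int : Integrable (fun ω => |Real.log (Z ω)|) P)
    (hZ_nonconst : ¬ ∃ c : ℝ, ∀ᵐ ω ∂P, Z ω = c)
    (g : ℝ → ℝ) (hgpos : ∀ S, 0 < S → 0 < g S)
    (hg : ∀ S, 0 < S →
      ∫ ω, (if g S < Z ω then (g S)⁻¹ - (Z ω)⁻¹ else 0) ∂P = S) :
    ∃ S₀ > 0, ∀ S, 0 < S → S < S₀ →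
      Real.log (1 + S * ∫ ω, Z ω ∂P) <
        ∫ ω, (if g S < Z ω then Real.log (Z ω / g S) else 0) ∂P := by
  set m := ∫ ω, Z ω ∂P with hm_def
  have hm : 0 < m := hZ_mean_pos
  -- the water-filling integrand at threshold γ
  set f : ℝ → Ω → ℝ := fun γ ω => if γ < Z ω then γ⁻¹ - (Z ω)⁻¹ else 0 with hf_def
  have hf_nonneg : ∀ γ, 0 < γ → ∀ ω, 0 ≤ f γ ω := by
    intro γ hγ ω
    simp only [hf_def]
    split_ifs with h
    · have hZω : 0 < Z ω := hγ.trans h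
      have h1 : (Z ω)⁻¹ ≤ γ⁻¹ := inv_anti₀ hγ h.le
      linarith
    · exact le_refl 0
  have hf_le : ∀ γ, 0 < γ → ∀ ω, f γ ω ≤ γ⁻¹ := by
    intro γ hγ ω
    simp only [hf_def]
    split_ifs with h
    · have hZω : 0 < Z ω := hγ.trans h
      have : 0 ≤ (Z ω)⁻¹ := by positivity
      linarith
    · positivity
  have hf_meas : ∀ γ : ℝ, Measurable (f γ) := fun γ =>
    Measurable.ite (measurableSet_lt measurable_const hZ)
      (measurable_const.sub hZ.inv) measurable_const
  have hf_int : ∀ γ, 0 < γ → Integrable (f γ) P := by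
    intro γ hγ
    refine Integrable.mono' (integrable_const γ⁻¹) ((hf_meas γ).aestronglyMeasurable) ?_
    filter_upwards with ω
    rw [Real.norm_eq_abs, abs_of_nonneg (hf_nonneg γ hγ ω)]
    exact hf_le γ hγ ω
  have hf_mono : ∀ γ₁ γ₂ : ℝ, 0 < γ₁ → γ₁ ≤ γ₂ → ∀ ω, f γ₂ ω ≤ f γ₁ ω := by
    intro γ₁ γ₂ hγ₁ hle ω
    simp only [hf_def]
    by_cases h2 : γ₂ < Z ω
    · have h1 : γ₁ < Z ω := lt_of_le_of_lt hle h2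
      simp only [h1, h2, if_true]
      have : γ₂⁻¹ ≤ γ₁⁻¹ := inv_anti₀ hγ₁ hle
      linarith
    · simp only [h2, if_false]
      split_ifs with h1
      · have hZω : 0 < Z ω := hγ₁.trans h1
        have : (Z ω)⁻¹ ≤ γ₁⁻¹ := inv_anti₀ hγ₁ h1.le
        linarith
      · exact le_refl 0
  -- P(Z > m) > 0
  have hPm : 0 < P {ω | m < Z ω} := by
    by_contra h
    have h0 : P {ω | m < Z ω} = 0 := by
      simpa [pos_iff_ne_zero, not_not] using h
    have hle : ∀ᵐ ω ∂P, Z ω ≤ m := by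
      rw [ae_iff]
      simpa [not_le] using h0
    have hnn : 0 ≤ᵐ[P] fun ω => m - Z ω := by
      filter_upwards [hle] with ω hω
      simp only [Pi.zero_apply]
      linarith
    have hint : Integrable (fun ω => m - Z ω) P := (integrable_const m).sub hZ_int
    have hzero : ∫ ω, (m - Z ω) ∂P = 0 := by
      rw [integral_sub (integrable_const m) hZ_int]
      simp [← hm_def]
    have := (integral_eq_zero_iff_of_nonneg_ae hnn hint).mp hzero
    apply hZ_nonconst
    refine ⟨m, ?_⟩
    filter_upwards [this] with ω hω
    have : m - Z ω = 0 := hω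
    linarith
  -- ε : the power needed at threshold m
  set ε := ∫ ω, f m ω ∂P with hε_def
  have hε : 0 < ε := by
    rw [hε_def]
    rw [integral_pos_iff_support_of_nonneg_ae
      (Filter.Eventually.of_forall (hf_nonneg m hm)) (hf_int m hm)]
    refine lt_of_lt_of_le hPm (measure_mono ?_)
    intro ω hω
    simp only [Set.mem_setOf_eq] at hω
    have hZω : 0 < Z ω := hm.trans hω
    simp only [Function.mem_support, hf_def, hω, if_true]
    have : (Z ω)⁻¹ < m⁻¹ := by
      rw [inv_lt_inv₀ hZω hm]; exact hω
    intro hc; linarith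
  refine ⟨ε, hε, ?_⟩
  intro S hS hSε
  set γ := g S with hγ_def
  have hγ : 0 < γ := hgpos S hS
  have hgS : ∫ ω, f γ ω ∂P = S := hg S hS
  -- threshold dominates the mean at low SNR
  have hmγ : m ≤ γ := by
    by_contra h
    push_neg at h
    have : ε ≤ S := by
      rw [← hgS, hε_def]
      exact integral_mono (hf_int m hm) (hf_int γ hγ) (fun ω => hf_mono γ m hγ h.le ω)
    linarith
  -- the log integrand
    -- pointwise lower bound
  have key : ∀ ω, γ * f γ ω ≤ (if γ < Z ω then Real.log (Z ω / γ) else 0) := by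
    intro ω
    by_cases h : γ < Z ω
    · simp only [hf_def, h, if_true]
      have hZω : 0 < Z ω := hγ.trans h
      have h1 : Real.log (γ / Z ω) ≤ γ / Z ω - 1 :=
        Real.log_le_sub_one_of_pos (div_pos hγ hZω)
      have h2 : Real.log (Z ω / γ) = - Real.log (γ / Z ω) := by
        rw [← Real.log_inv]
        congr 1
        field_simp
      have h3 : γ * (γ⁻¹ - (Z ω)⁻¹) = 1 - γ / Z ω := by
        field_simp
      rw [h3, h2]
      linarith
    · simp [hf_def, h]
  have hL_meas : Measurable (fun ω => if γ < Z ω then Real.log (Z ω / γ) else 0) :=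
    Measurable.ite (measurableSet_lt measurable_const hZ)
      (Real.measurable_log.comp (hZ.div_const γ)) measurable_const
  have hL_int : Integrable (fun ω => if γ < Z ω then Real.log (Z ω / γ) else 0) P := by
    refine Integrable.mono' (hlog_int.add (integrable_const |Real.log γ|))
      hL_meas.aestronglyMeasurable ?_
    filter_upwards with ω
    rw [Real.norm_eq_abs]
    split_ifs with h
    · have hZω : 0 < Z ω := hγ.trans h
      rw [Real.log_div (ne_of_gt hZω) (ne_of_gt hγ)]
      exact (abs_sub _ _).trans (by simp)
    · simp [abs_nonneg, abs_nonneg (Real.log (Z ω))]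
      positivity
  calc Real.log (1 + S * m) < S * m := by
        have h1 : (0:ℝ) < 1 + S * m := by positivity
        have h2 : (1:ℝ) + S * m ≠ 1 := by nlinarith
        have := Real.log_lt_sub_one_of_pos h1 h2
        linarith
    _ ≤ S * γ := by nlinarith
    _ = γ * S := mul_comm _ _
    _ = γ * ∫ ω, f γ ω ∂P := by rw [hgS]
    _ = ∫ ω, γ * f γ ω ∂P := (integral_const_mul γ _).symm
    _ ≤ ∫ ω, (if γ < Z ω then Real.log (Z ω / γ) else 0) ∂P :=
        integral_mono ((hf_int γ hγ).const_mul γ) hL_int key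
end

section
/- Let Z satisfy 𝔓(Z > 0) = 1, and for t > 0 with 𝔓(Z > t) > 0 define L(t) = 𝔓(Z > t)/E[Z⁻¹·1{Z > t}] (the low-SNR capacity slope of truncated channel inversion with threshold t). Then: (i) L(t) ≥ t for every such t; (ii) L is nondecreasing: if 0 < t₁ ≤ t₂ and 𝔓(Z > t₂) > 0 then L(t₁) ≤ L(t₂); (iii) L(t) ≤ sup{z : F(z) < 1}; (iv) if 0 < E[Z⁻¹] < ∞ then L(t) ≥ 1/E[Z⁻¹]; and consequently (v) if E[Z] < ∞ and t ≥ E[Z], then L(t) ≥ E[Z], i.e., the low-SNR slope of TCI with threshold t ≥ E[Z] is at least the low-SNR slope of the AWGN capacity. -/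
/-!
On `{Z > t}` the integrand `Z⁻¹` is at most `1/t`, so `E[Z⁻¹·1{Z > t}] ≤ P(Z > t)/t`, i.e.
`L(t) ≥ t`; symmetrically, `Z ≤ M` almost surely gives `L(t) ≤ M`. Lowering the threshold from
`t₂` to `t₁` adds the slab `{t₁ < Z ≤ t₂}`, whose own ratio `P/E[Z⁻¹]` is at most
`t₂ ≤ L(t₂)`, so the mediant `L(t₁)` cannot exceed `L(t₂)`. Since `P(Z > 0) = 1`,
`L(0) = 1/E[Z⁻¹]`, and (iv) is monotonicity from the threshold `0`; (v) is a corollary of (i).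
-/

open MeasureTheory Filter Topology

/-- The low-SNR capacity slope `L(t) = P(Z > t)/E[Z⁻¹·1{Z > t}]` of truncated channel
inversion with threshold `t`. -/
noncomputable def tciSlope {Ω : Type*} [MeasurableSpace Ω] (P : Measure Ω) (Z : Ω → ℝ)
    (t : ℝ) : ℝ :=
  (P {ω | t < Z ω}).toReal / ∫ ω, (if t < Z ω then (Z ω)⁻¹ else 0) ∂P

section

variable {Ω : Type*} [MeasurableSpace Ω] {P : Measure Ω} {Z : Ω → ℝ} {S : Set Ω} {t t₁ t₂ : ℝ}

lemma tciSlope_eq_div_setIntegral (hZ : Measurable Z) (t : ℝ) :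
    tciSlope P Z t = P.real {ω | t < Z ω} / ∫ ω in {ω | t < Z ω}, (Z ω)⁻¹ ∂P := by
  rw [tciSlope, ← integral_indicator (measurableSet_lt measurable_const hZ)]
  rfl

lemma setIntegral_inv_pos (hS : MeasurableSet S) (hint : IntegrableOn (fun ω => (Z ω)⁻¹) S P)
    (hpos : ∀ ω ∈ S, 0 < Z ω) (hS₀ : 0 < P S) : 0 < ∫ ω in S, (Z ω)⁻¹ ∂P := by
  rw [setIntegral_pos_iff_support_of_nonneg_ae ?_ hint]
  · exact hS₀.trans_le (measure_mono fun ω hω => ⟨(inv_pos.2 (hpos ω hω)).ne', hω⟩)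
  · filter_upwards [ae_restrict_mem hS] with ω hω
    exact (inv_pos.2 (hpos ω hω)).le

section FiniteMeasure

variable [IsFiniteMeasure P]

lemma integrableOn_inv_of_le (hZ : Measurable Z) (hS : MeasurableSet S) {a : ℝ} (ha : 0 < a)
    (h : ∀ ω ∈ S, a ≤ Z ω) : IntegrableOn (fun ω => (Z ω)⁻¹) S P := by
  refine Measure.integrableOn_of_bounded (measure_ne_top P S) hZ.inv.aestronglyMeasurable
    (M := a⁻¹) ?_
  filter_upwards [ae_restrict_mem hS] with ω hω
  rw [norm_inv, Real.norm_of_nonneg (ha.trans_le (h ω hω)).le]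
  exact inv_anti₀ ha (h ω hω)

lemma mul_setIntegral_inv_le (hS : MeasurableSet S) {a : ℝ} (ha : 0 < a)
    (h : ∀ ω ∈ S, a ≤ Z ω) : a * ∫ ω in S, (Z ω)⁻¹ ∂P ≤ P.real S := by
  have hle : ∫ ω in S, (Z ω)⁻¹ ∂P ≤ ∫ _ in S, a⁻¹ ∂P := by
    refine integral_mono_of_nonneg ?_ (integrable_const _) ?_ <;>
      filter_upwards [ae_restrict_mem hS] with ω hω
    · exact inv_nonneg.2 (ha.trans_le (h ω hω)).le
    · exact inv_anti₀ ha (h ω hω)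
  rw [setIntegral_const, smul_eq_mul] at hle
  calc a * ∫ ω in S, (Z ω)⁻¹ ∂P ≤ a * (P.real S * a⁻¹) := by gcongr
    _ = P.real S := by field_simp

lemma measureReal_le_mul_setIntegral_inv (hS : MeasurableSet S)
    (hint : IntegrableOn (fun ω => (Z ω)⁻¹) S P) (hpos : ∀ ω ∈ S, 0 < Z ω) {b : ℝ}
    (hb : ∀ᵐ ω ∂P.restrict S, Z ω ≤ b) : P.real S ≤ b * ∫ ω in S, (Z ω)⁻¹ ∂P := by
  calc P.real S = ∫ _ in S, (1 : ℝ) ∂P := by simp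
    _ ≤ ∫ ω in S, b * (Z ω)⁻¹ ∂P := by
      refine integral_mono_ae (integrable_const _) (hint.const_mul b) ?_
      filter_upwards [hb, ae_restrict_mem hS] with ω hbω hω
      rw [← div_eq_mul_inv, one_le_div (hpos ω hω)]
      exact hbω
    _ = b * ∫ ω in S, (Z ω)⁻¹ ∂P := integral_const_mul b _

lemma integrableOn_inv_setOf_lt (hZ : Measurable Z) (ht : 0 < t) :
    IntegrableOn (fun ω => (Z ω)⁻¹) {ω | t < Z ω} P :=
  integrableOn_inv_of_le hZ (measurableSet_lt measurable_const hZ) ht fun _ hω => le_of_lt hω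

lemma setIntegral_inv_setOf_lt_pos (hZ : Measurable Z) (ht : 0 < t)
    (hp : 0 < P {ω | t < Z ω}) : 0 < ∫ ω in {ω | t < Z ω}, (Z ω)⁻¹ ∂P :=
  setIntegral_inv_pos (measurableSet_lt measurable_const hZ) (integrableOn_inv_setOf_lt hZ ht)
    (fun _ hω => ht.trans hω) hp

lemma le_tciSlope (hZ : Measurable Z) (ht : 0 < t) (hp : 0 < P {ω | t < Z ω}) :
    t ≤ tciSlope P Z t := by
  rw [tciSlope_eq_div_setIntegral hZ, le_div_iff₀ (setIntegral_inv_setOf_lt_pos hZ ht hp)]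
  exact mul_setIntegral_inv_le (measurableSet_lt measurable_const hZ) ht fun _ hω => le_of_lt hω

lemma tciSlope_mono (hZ : Measurable Z) (ht₁ : 0 ≤ t₁) (h₁₂ : t₁ ≤ t₂) (ht₂ : 0 < t₂)
    (hp : 0 < P {ω | t₂ < Z ω})
    (hint : IntegrableOn (fun ω => (Z ω)⁻¹) {ω | t₁ < Z ω} P) :
    tciSlope P Z t₁ ≤ tciSlope P Z t₂ := by
  have hsub : {ω | t₂ < Z ω} ⊆ {ω | t₁ < Z ω} := fun ω hω => h₁₂.trans_lt hω
  set B := {ω | t₁ < Z ω} \ {ω | t₂ < Z ω}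
  have hB : MeasurableSet B :=
    (measurableSet_lt measurable_const hZ).diff (measurableSet_lt measurable_const hZ)
  have hBpos : ∀ ω ∈ B, 0 < Z ω := fun ω hω => ht₁.trans_lt hω.1
  have hintB : IntegrableOn (fun ω => (Z ω)⁻¹) B P := hint.mono_set Set.sdiff_subset
  have hp_split : P.real {ω | t₁ < Z ω} = P.real {ω | t₂ < Z ω} + P.real B := by
    rw [← measureReal_union Set.disjoint_sdiff_right hB, Set.union_sdiff_cancel hsub]
  have he_split : ∫ ω in {ω | t₁ < Z ω}, (Z ω)⁻¹ ∂P
      = ∫ ω in {ω | t₂ < Z ω}, (Z ω)⁻¹ ∂P + ∫ ω in B, (Z ω)⁻¹ ∂P := by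
    rw [← setIntegral_union Set.disjoint_sdiff_right hB (hint.mono_set hsub) hintB,
      Set.union_sdiff_cancel hsub]
  have he₂ := setIntegral_inv_setOf_lt_pos hZ ht₂ hp
  have hd : 0 ≤ ∫ ω in B, (Z ω)⁻¹ ∂P :=
    setIntegral_nonneg hB fun ω hω => (inv_pos.2 (hBpos ω hω)).le
  have hL := le_tciSlope hZ ht₂ hp
  have hp₂ : P.real {ω | t₂ < Z ω} = tciSlope P Z t₂ * ∫ ω in {ω | t₂ < Z ω}, (Z ω)⁻¹ ∂P := by
    rw [tciSlope_eq_div_setIntegral hZ, div_mul_cancel₀ _ he₂.ne']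
  have hq : P.real B ≤ tciSlope P Z t₂ * ∫ ω in B, (Z ω)⁻¹ ∂P :=
    (measureReal_le_mul_setIntegral_inv hB hintB hBpos
      (ae_restrict_of_forall_mem hB fun _ hω => not_lt.1 hω.2)).trans
      (mul_le_mul_of_nonneg_right hL hd)
  rw [tciSlope_eq_div_setIntegral hZ t₁, hp_split, he_split, div_le_iff₀ (by positivity)]
  linarith

lemma tciSlope_le_of_ae_le (hZ : Measurable Z) (ht : 0 < t) (hp : 0 < P {ω | t < Z ω}) {M : ℝ}
    (hM : ∀ᵐ ω ∂P, Z ω ≤ M) : tciSlope P Z t ≤ M := by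
  rw [tciSlope_eq_div_setIntegral hZ, div_le_iff₀ (setIntegral_inv_setOf_lt_pos hZ ht hp)]
  exact measureReal_le_mul_setIntegral_inv (measurableSet_lt measurable_const hZ)
    (integrableOn_inv_setOf_lt hZ ht) (fun _ hω => ht.trans hω) (ae_restrict_of_ae hM)

end FiniteMeasure

variable [IsProbabilityMeasure P]

lemma ae_le_of_mem_upperBounds (hZ : Measurable Z) {M : ℝ}
    (hM : M ∈ upperBounds {z : ℝ | P {ω | Z ω ≤ z} < 1}) : ∀ᵐ ω ∂P, Z ω ≤ M := by
  have h_above : ∀ z, M < z → ∀ᵐ ω ∂P, Z ω ≤ z := by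
    intro z hz
    rw [ae_iff_measure_eq (measurableSet_le hZ measurable_const).nullMeasurableSet, measure_univ]
    by_contra h
    exact hz.not_ge (hM (lt_of_le_of_ne prob_le_one h))
  have h_seq : ∀ᵐ ω ∂P, ∀ n : ℕ, Z ω ≤ M + 1 / (n + 1) :=
    ae_all_iff.2 fun n => h_above _ (lt_add_of_pos_right _ Nat.one_div_pos_of_nat)
  filter_upwards [h_seq] with ω hω
  exact ge_of_tendsto' (by simpa using tendsto_one_div_add_atTop_nhds_zero_nat.const_add M) hω

lemma tciSlope_zero (hZ : Measurable Z) (hZpos : P {ω | 0 < Z ω} = 1) :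
    tciSlope P Z 0 = (∫ ω, (Z ω)⁻¹ ∂P)⁻¹ := by
  have hae : ∀ᵐ ω ∂P, ω ∈ {ω | 0 < Z ω} := by
    rw [ae_mem_iff_measure_eq (measurableSet_lt measurable_const hZ).nullMeasurableSet, hZpos,
      measure_univ]
  rw [tciSlope_eq_div_setIntegral hZ, Measure.restrict_eq_self_of_ae_mem hae, measureReal_def,
    hZpos, ENNReal.toReal_one, one_div]

end

/-- **Properties of the low-SNR slope of truncated channel inversion.** Let `Z` satisfy
`P(Z > 0) = 1`, and consider `L(t) = P(Z > t)/E[Z⁻¹·1{Z > t}]` for `t > 0` with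
`P(Z > t) > 0`. Then (i) `L(t) ≥ t`; (ii) `L` is nondecreasing; (iii) `L(t)` is at most any
upper bound of `{z : F(z) < 1}` (i.e. `L(t) ≤ sup{z : F(z) < 1}`); (iv) if `0 < E[Z⁻¹] < ∞`
then `L(t) ≥ 1/E[Z⁻¹]`; and (v) if `E[Z] < ∞` and `t ≥ E[Z]` then `L(t) ≥ E[Z]`, the low-SNR
slope of the AWGN capacity. -/
theorem tci_low_snr_slope_properties
    {Ω : Type*} [MeasurableSpace Ω] (P : Measure Ω) [IsProbabilityMeasure P]
    (Z : Ω → ℝ) (hZ : Measurable Z) (hZpos : P {ω | 0 < Z ω} = 1) :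
    (∀ t, 0 < t → 0 < P {ω | t < Z ω} → t ≤ tciSlope P Z t) ∧
    (∀ t₁ t₂, 0 < t₁ → t₁ ≤ t₂ → 0 < P {ω | t₂ < Z ω} →
      tciSlope P Z t₁ ≤ tciSlope P Z t₂) ∧
    (∀ t, 0 < t → 0 < P {ω | t < Z ω} →
      ∀ M ∈ upperBounds {z : ℝ | P {ω | Z ω ≤ z} < 1}, tciSlope P Z t ≤ M) ∧
    (Integrable (fun ω => (Z ω)⁻¹) P → 0 < ∫ ω, (Z ω)⁻¹ ∂P →
      ∀ t, 0 < t → 0 < P {ω | t < Z ω} →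
        (∫ ω, (Z ω)⁻¹ ∂P)⁻¹ ≤ tciSlope P Z t) ∧
    (Integrable Z P →
      ∀ t, 0 < t → 0 < P {ω | t < Z ω} → (∫ ω, Z ω ∂P) ≤ t →
        (∫ ω, Z ω ∂P) ≤ tciSlope P Z t) := by
  refine ⟨fun t ht hp => le_tciSlope hZ ht hp, fun t₁ t₂ ht₁ h₁₂ hp => ?_,
    fun t ht hp M hM => tciSlope_le_of_ae_le hZ ht hp (ae_le_of_mem_upperBounds hZ hM),
    fun hI _ t ht hp => ?_, fun _ t ht hp hle => hle.trans (le_tciSlope hZ ht hp)⟩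
  · exact tciSlope_mono hZ ht₁.le h₁₂ (ht₁.trans_le h₁₂) hp (integrableOn_inv_setOf_lt hZ ht₁)
  · rw [← tciSlope_zero hZ hZpos]
    exact tciSlope_mono hZ le_rfl ht.le ht hp hI.integrableOn
end

section
/- For integer K ≥ 2, let Z_K have the density f_K(z) = K·e^{−z}·(1 − e^{−z})^{K−1} on (0,∞) (the maximum of K i.i.d. unit-mean exponential random variables). Then (log K)·E[Z_K⁻¹] → 1 as K → ∞, where E[Z_K⁻¹] = ∫₀^∞ z⁻¹·K·e^{−z}·(1 − e^{−z})^{K−1} dz (which is finite for K ≥ 2). -/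
/-!
`Z_K` concentrates near `log K`, where `z⁻¹` is nearly constant. Below any `b > 0` we have
`z⁻¹ ≥ b⁻¹`, so `E[Z_K⁻¹] ≥ b⁻¹ P(Z_K ≤ b)`. Above any `a > 0` we have `z⁻¹ ≤ a⁻¹`, while below `a`
the inequality `1 - e^{-z} ≤ z` turns `z⁻¹ f_K` into at most `K/(K-1) f_{K-1}`, whose mass on
`(0, a]` is `K/(K-1) P(Z_{K-1} ≤ a)`. With `a, b = log K ∓ 2 log log K`, the probability
`P(Z_K ≤ b)` tends to `1` and `P(Z_{K-1} ≤ a) ≤ 1/K`.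
-/

open MeasureTheory Filter Topology Set Real

noncomputable def maxExpDensity (K : ℕ) (z : ℝ) : ℝ :=
  K * exp (-z) * (1 - exp (-z)) ^ (K - 1)

lemma one_sub_exp_neg_nonneg {z : ℝ} (hz : 0 ≤ z) : 0 ≤ 1 - exp (-z) := by
  linarith [exp_le_one_iff.mpr (neg_nonpos.mpr hz)]

lemma one_sub_exp_neg_le_self (z : ℝ) : 1 - exp (-z) ≤ z := by
  linarith [one_sub_le_exp_neg z]

lemma maxExpDensity_nonneg (K : ℕ) {z : ℝ} (hz : 0 ≤ z) : 0 ≤ maxExpDensity K z := by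
  have := one_sub_exp_neg_nonneg hz
  unfold maxExpDensity; positivity

lemma continuous_maxExpDensity (K : ℕ) : Continuous (maxExpDensity K) := by
  unfold maxExpDensity; fun_prop

lemma hasDerivAt_one_sub_exp_neg_pow (K : ℕ) (z : ℝ) :
    HasDerivAt (fun z => (1 - exp (-z)) ^ K) (maxExpDensity K z) z := by
  refine ((((hasDerivAt_neg z).exp).const_sub 1).fun_pow K).congr_deriv ?_
  simp only [maxExpDensity]
  ring

lemma integral_maxExpDensity_Ioc (K : ℕ) {p q : ℝ} (hpq : p ≤ q) :
    ∫ z in Ioc p q, maxExpDensity K z = (1 - exp (-q)) ^ K - (1 - exp (-p)) ^ K := by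
  rw [← intervalIntegral.integral_of_le hpq]
  exact intervalIntegral.integral_eq_sub_of_hasDerivAt
    (fun z _ => hasDerivAt_one_sub_exp_neg_pow K z)
    ((continuous_maxExpDensity K).intervalIntegrable p q)

lemma tendsto_one_sub_exp_neg_pow (K : ℕ) :
    Tendsto (fun z => (1 - exp (-z)) ^ K) atTop (𝓝 1) := by
  simpa using ((tendsto_exp_neg_atTop_nhds_zero.const_sub 1).pow K)

lemma integrableOn_maxExpDensity_Ioi (K : ℕ) {a : ℝ} (ha : 0 ≤ a) :
    IntegrableOn (maxExpDensity K) (Ioi a) :=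
  integrableOn_Ioi_deriv_of_nonneg' (fun z _ => hasDerivAt_one_sub_exp_neg_pow K z)
    (fun _ hz => maxExpDensity_nonneg K (ha.trans (le_of_lt hz))) (tendsto_one_sub_exp_neg_pow K)

lemma integral_maxExpDensity_Ioi (K : ℕ) {a : ℝ} (ha : 0 ≤ a) :
    ∫ z in Ioi a, maxExpDensity K z = 1 - (1 - exp (-a)) ^ K :=
  integral_Ioi_of_hasDerivAt_of_nonneg' (fun z _ => hasDerivAt_one_sub_exp_neg_pow K z)
    (fun _ hz => maxExpDensity_nonneg K (ha.trans (le_of_lt hz))) (tendsto_one_sub_exp_neg_pow K)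

lemma inv_mul_maxExpDensity_le {K : ℕ} (hK : 2 ≤ K) {z : ℝ} (hz : 0 < z) :
    z⁻¹ * maxExpDensity K z ≤ K / (K - 1) * maxExpDensity (K - 1) z := by
  obtain ⟨n, rfl⟩ : ∃ n, K = n + 2 := ⟨K - 2, by omega⟩
  simp only [maxExpDensity, show n + 2 - 1 = n + 1 by omega, Nat.add_sub_cancel, pow_succ]
  push_cast
  calc z⁻¹ * ((n + 2) * exp (-z) * ((1 - exp (-z)) ^ n * (1 - exp (-z))))
      = (n + 2) * exp (-z) * (1 - exp (-z)) ^ n * ((1 - exp (-z)) / z) := by ring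
    _ ≤ (n + 2) * exp (-z) * (1 - exp (-z)) ^ n * 1 := by
      have := one_sub_exp_neg_nonneg hz.le
      gcongr
      exact (div_le_one hz).2 (one_sub_exp_neg_le_self z)
    _ = (n + 2) / (n + 2 - 1) * ((n + 1) * exp (-z) * (1 - exp (-z)) ^ n) := by
      rw [show (n : ℝ) + 2 - 1 = n + 1 by ring]
      field_simp

lemma integrableOn_inv_mul_maxExpDensity {K : ℕ} (hK : 2 ≤ K) :
    IntegrableOn (fun z => z⁻¹ * maxExpDensity K z) (Ioi 0) := by
  have hmeas : AEStronglyMeasurable (fun z => z⁻¹ * maxExpDensity K z) :=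
    (measurable_inv.mul (continuous_maxExpDensity K).measurable).aestronglyMeasurable
  rw [← Ioc_union_Ioi_eq_Ioi zero_le_one]
  refine IntegrableOn.union ?_ ?_
  · refine Integrable.mono' (((continuous_maxExpDensity (K - 1)).integrableOn_Ioc).const_mul
      ((K : ℝ) / (K - 1))) hmeas.restrict ?_
    filter_upwards [ae_restrict_mem measurableSet_Ioc] with z hz
    rw [Real.norm_of_nonneg (mul_nonneg (inv_nonneg.2 hz.1.le) (maxExpDensity_nonneg K hz.1.le))]
    exact inv_mul_maxExpDensity_le hK hz.1
  · refine Integrable.mono' (integrableOn_maxExpDensity_Ioi K zero_le_one) hmeas.restrict ?_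
    filter_upwards [ae_restrict_mem measurableSet_Ioi] with z hz
    have hz0 : (0 : ℝ) < z := one_pos.trans hz
    rw [Real.norm_of_nonneg (mul_nonneg (inv_nonneg.2 hz0.le) (maxExpDensity_nonneg K hz0.le))]
    exact mul_le_of_le_one_left (maxExpDensity_nonneg K hz0.le) (inv_le_one_of_one_le₀ hz.le)

lemma le_integral_inv_mul_maxExpDensity {K : ℕ} (hK : 2 ≤ K) {b : ℝ} (hb : 0 < b) :
    b⁻¹ * (1 - exp (-b)) ^ K ≤ ∫ z in Ioi 0, z⁻¹ * maxExpDensity K z := by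
  have hint := integrableOn_inv_mul_maxExpDensity hK
  calc b⁻¹ * (1 - exp (-b)) ^ K = ∫ z in Ioc 0 b, b⁻¹ * maxExpDensity K z := by
        rw [integral_const_mul, integral_maxExpDensity_Ioc K hb.le]
        simp [show K ≠ 0 by omega]
    _ ≤ ∫ z in Ioc 0 b, z⁻¹ * maxExpDensity K z := by
        refine setIntegral_mono_on (((continuous_maxExpDensity K).integrableOn_Ioc).const_mul _)
          (hint.mono_set Ioc_subset_Ioi_self) measurableSet_Ioc fun z hz => ?_
        exact mul_le_mul_of_nonneg_right (inv_anti₀ hz.1 hz.2) (maxExpDensity_nonneg K hz.1.le)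
    _ ≤ ∫ z in Ioi 0, z⁻¹ * maxExpDensity K z := by
        refine setIntegral_mono_set hint ?_ Ioc_subset_Ioi_self.eventuallyLE
        filter_upwards [ae_restrict_mem measurableSet_Ioi] with z hz
        exact mul_nonneg (inv_nonneg.2 (le_of_lt hz)) (maxExpDensity_nonneg K (le_of_lt hz))

lemma integral_inv_mul_maxExpDensity_le {K : ℕ} (hK : 2 ≤ K) {a : ℝ} (ha : 0 < a) :
    ∫ z in Ioi 0, z⁻¹ * maxExpDensity K z ≤ K / (K - 1) * (1 - exp (-a)) ^ (K - 1) + a⁻¹ := by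
  have hint := integrableOn_inv_mul_maxExpDensity hK
  rw [← Ioc_union_Ioi_eq_Ioi ha.le, setIntegral_union Ioc_disjoint_Ioi_same measurableSet_Ioi
    (hint.mono_set Ioc_subset_Ioi_self) (hint.mono_set (Ioi_subset_Ioi ha.le))]
  gcongr
  · calc ∫ z in Ioc 0 a, z⁻¹ * maxExpDensity K z
        ≤ ∫ z in Ioc 0 a, K / (K - 1) * maxExpDensity (K - 1) z := by
          refine setIntegral_mono_on (hint.mono_set Ioc_subset_Ioi_self)
            (((continuous_maxExpDensity _).integrableOn_Ioc).const_mul _) measurableSet_Ioc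
            fun z hz => inv_mul_maxExpDensity_le hK hz.1
      _ = K / (K - 1) * (1 - exp (-a)) ^ (K - 1) := by
          rw [integral_const_mul, integral_maxExpDensity_Ioc _ ha.le]
          simp [show K - 1 ≠ 0 by omega]
  · calc ∫ z in Ioi a, z⁻¹ * maxExpDensity K z ≤ ∫ z in Ioi a, a⁻¹ * maxExpDensity K z := by
          refine setIntegral_mono_on (hint.mono_set (Ioi_subset_Ioi ha.le))
            ((integrableOn_maxExpDensity_Ioi K ha.le).const_mul _) measurableSet_Ioi fun z hz => ?_
          exact mul_le_mul_of_nonneg_right (inv_anti₀ ha hz.le)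
            (maxExpDensity_nonneg K (ha.trans hz).le)
      _ = a⁻¹ * (1 - (1 - exp (-a)) ^ K) := by
          rw [integral_const_mul, integral_maxExpDensity_Ioi K ha.le]
      _ ≤ a⁻¹ := mul_le_of_le_one_right (inv_nonneg.2 ha.le)
          (sub_le_self _ (pow_nonneg (one_sub_exp_neg_nonneg ha.le) K))

lemma one_sub_pow_le_exp_neg_mul {x : ℝ} (hx : x ≤ 1) (n : ℕ) :
    (1 - x) ^ n ≤ exp (-(n * x)) := by
  calc (1 - x) ^ n ≤ exp (-x) ^ n := pow_le_pow_left₀ (by linarith) (one_sub_le_exp_neg x) n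
    _ = exp (-(n * x)) := by rw [← exp_nat_mul, mul_neg]

lemma tendsto_log_div_self_atTop : Tendsto (fun x => log x / x) atTop (𝓝 0) := by
  simpa using tendsto_pow_log_div_mul_add_atTop 1 0 1 one_ne_zero

lemma tendsto_div_add_mul_log (c : ℝ) :
    Tendsto (fun x => x / (x + c * log x)) atTop (𝓝 1) := by
  have h := ((tendsto_log_div_self_atTop.const_mul c).const_add 1).inv₀ (by norm_num)
  simp only [mul_zero, add_zero, inv_one] at h
  refine h.congr' ?_
  filter_upwards [eventually_ne_atTop 0] with x hx
  rw [← inv_div]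
  field_simp

lemma tendsto_log_natCast_atTop : Tendsto (fun K : ℕ => log K) atTop atTop :=
  tendsto_log_atTop.comp tendsto_natCast_atTop_atTop

lemma two_mul_log_eq_log_sq (x : ℝ) : 2 * log x = log (x ^ 2) := by
  rw [log_pow, Nat.cast_ofNat]

lemma eventually_le_log_mul_integral : ∀ᶠ K : ℕ in atTop,
    log K / (log K + 2 * log (log K)) * (1 - (log K ^ 2)⁻¹) ≤
      log K * ∫ z in Ioi 0, z⁻¹ * maxExpDensity K z := by
  filter_upwards [eventually_ge_atTop 2, tendsto_log_natCast_atTop.eventually_ge_atTop 1]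
    with K hK hL
  set b := log K + 2 * log (log K)
  have hb : 0 < b := by have := log_nonneg hL; positivity
  have hKb : (K : ℝ) * exp (-b) = (log K ^ 2)⁻¹ := by
    have hK0 : (0 : ℝ) < K := by positivity
    rw [exp_neg, exp_add, exp_log hK0, two_mul_log_eq_log_sq, exp_log (by positivity), mul_inv,
      ← mul_assoc, mul_inv_cancel₀ hK0.ne', one_mul]
  have bernoulli : 1 - (log K ^ 2)⁻¹ ≤ (1 - exp (-b)) ^ K := by
    have := one_add_mul_le_pow (show -2 ≤ -exp (-b) by
      linarith [exp_le_one_iff.mpr (neg_nonpos.mpr hb.le)]) K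
    rw [← sub_eq_add_neg] at this
    linarith
  calc log K / b * (1 - (log K ^ 2)⁻¹) ≤ log K * (b⁻¹ * (1 - exp (-b)) ^ K) := by
        rw [← mul_assoc, ← div_eq_mul_inv]
        gcongr
    _ ≤ log K * ∫ z in Ioi 0, z⁻¹ * maxExpDensity K z := by
        gcongr
        exact le_integral_inv_mul_maxExpDensity hK hb

lemma eventually_log_mul_integral_le : ∀ᶠ K : ℕ in atTop,
    log K * ∫ z in Ioi 0, z⁻¹ * maxExpDensity K z ≤
      2 * (log K / K) + log K / (log K - 2 * log (log K)) := by
  filter_upwards [eventually_ge_atTop 2, tendsto_log_natCast_atTop.eventually_ge_atTop 2,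
    tendsto_log_natCast_atTop.eventually (tendsto_log_div_self_atTop.eventually
      (gt_mem_nhds (show (0 : ℝ) < 1 / 2 by norm_num)))] with K hK hL hlog
  set a := log K - 2 * log (log K)
  have hK0 : (0 : ℝ) < K := by positivity
  have hK2 : (2 : ℝ) ≤ K := by exact_mod_cast hK
  have ha : 0 < a := by
    rw [div_lt_iff₀ (by linarith)] at hlog
    linarith
  have hexp : exp (-a) = log K ^ 2 / K := by
    rw [neg_sub, exp_sub, two_mul_log_eq_log_sq, exp_log (by positivity), exp_log hK0]
  have hpow : (1 - exp (-a)) ^ (K - 1) ≤ (K : ℝ)⁻¹ := by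
    calc (1 - exp (-a)) ^ (K - 1) ≤ exp (-((K - 1 : ℕ) * exp (-a))) :=
          one_sub_pow_le_exp_neg_mul (exp_le_one_iff.mpr (by linarith)) _
      _ ≤ exp (-log K) := by
          rw [exp_le_exp, hexp, Nat.cast_sub (by omega), Nat.cast_one, neg_le_neg_iff,
            mul_div_assoc', le_div_iff₀ hK0]
          have : (K : ℝ) ≤ (K - 1) * log K := by nlinarith
          nlinarith
      _ = (K : ℝ)⁻¹ := by rw [exp_neg, exp_log hK0]
  have hratio : (K : ℝ) / (K - 1) ≤ 2 := by
    rw [div_le_iff₀ (by linarith)]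
    linarith
  calc log K * ∫ z in Ioi 0, z⁻¹ * maxExpDensity K z
      ≤ log K * (K / (K - 1) * (1 - exp (-a)) ^ (K - 1) + a⁻¹) := by
        gcongr
        exact integral_inv_mul_maxExpDensity_le hK ha
    _ ≤ log K * (2 * (K : ℝ)⁻¹ + a⁻¹) := by
        have := pow_nonneg (one_sub_exp_neg_nonneg ha.le) (K - 1)
        gcongr
    _ = 2 * (log K / K) + log K / a := by ring

/-- **Inverse moment of the maximum of `K` i.i.d. exponentials.** For integer `K ≥ 2`, let
`Z_K` have the density `f_K(z) = K·e^{−z}·(1 − e^{−z})^{K−1}` on `(0,∞)` (the maximum of `K`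
i.i.d. unit-mean exponential random variables). Then `(log K)·E[Z_K⁻¹] → 1` as `K → ∞`. -/
theorem log_mul_inverse_moment_max_exponentials_tendsto_one :
    Tendsto (fun K : ℕ =>
        Real.log K * ∫ z in Set.Ioi (0:ℝ),
          z⁻¹ * ((K : ℝ) * Real.exp (-z) * (1 - Real.exp (-z)) ^ (K - 1)))
      atTop (𝓝 1) := by
  have hL := tendsto_log_natCast_atTop
  have lower : Tendsto (fun K : ℕ => log K / (log K + 2 * log (log K)) * (1 - (log K ^ 2)⁻¹))
      atTop (𝓝 1) := by
    simpa using ((tendsto_div_add_mul_log 2).comp hL).mul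
      (((tendsto_pow_atTop two_ne_zero).comp hL).inv_tendsto_atTop.const_sub 1)
  have upper : Tendsto (fun K : ℕ => 2 * (log K / K) + log K / (log K - 2 * log (log K)))
      atTop (𝓝 1) := by
    simpa [sub_eq_add_neg] using
      ((tendsto_log_div_self_atTop.comp tendsto_natCast_atTop_atTop).const_mul 2).add
        ((tendsto_div_add_mul_log (-2)).comp hL)
  exact tendsto_of_tendsto_of_tendsto_of_le_of_le' lower upper eventually_le_log_mul_integral
    eventually_log_mul_integral_le
end

section
/- Let α > 1 and let K ≥ 1 be an integer, and let Z have CDF F(z) = exp(−K·z^{−α}) for z > 0, i.e., density f(z) = α·K·z^{−α−1}·exp(−K·z^{−α}) on (0,∞) (the maximum of K i.i.d. standard Fréchet(α) random variables). Then E[log Z] = (log K + γ_em)/α, E[Z⁻¹] = K^{−1/α}·Γ(1 + 1/α), and E[Z] = K^{1/α}·Γ(1 − 1/α); consequently E[log Z] + log(E[Z⁻¹]) = γ_em/α + log Γ(1 + 1/α) and log(E[Z]·E[Z⁻¹]) = log(Γ(1 − 1/α)·Γ(1 + 1/α)), neither of which depends on K. Hence, with Fréchet-distributed user gains, the high-SNR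 capacity gaps between optimal power and rate adaptation and channel inversion, and between AWGN and channel inversion, do not decrease as the number of users K increases. -/
/-!
The substitution `t = z ^ (-α)` carries the density `α c z ^ (-α - 1) exp (-c z ^ (-α))` to the
exponential density `c exp (-c t)`, so `Z = T ^ (-1/α)` with `T` exponential of rate `c`.
Hence `E[Z ^ s] = E[T ^ (-s/α)] = c ^ (s/α) Γ(1 - s/α)` for `s < α`, and
`E[log Z] = -E[log T] / α = (log c + γ) / α`, the last because `∫ log t e^{-t} = Γ'(1) = -γ`.
The factor `c = K` contributes `log K / α` to `E[log Z]`, `-log K / α` to `log E[Z⁻¹]`, and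
`K ^ (1/α) K ^ (-1/α) = 1` to `E[Z] E[Z⁻¹]`, so it cancels from both gaps.
-/

open MeasureTheory

section

open Real Set

theorem integral_log_mul_exp_neg :
    ∫ t in Ioi (0 : ℝ), log t * exp (-t) = -eulerMascheroniConstant := by
  have hderiv : HasDerivAt Complex.Gamma
      (∫ t : ℝ in Ioi 0, (t : ℂ) ^ ((1 : ℂ) - 1) * (log t * exp (-t))) 1 := by
    refine (Complex.hasDerivAt_GammaIntegral (by simp)).congr_of_eventuallyEq ?_
    filter_upwards [(Complex.continuous_re.isOpen_preimage _ isOpen_Ioi).mem_nhds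
      (by simp : (1 : ℂ) ∈ Complex.re ⁻¹' Ioi 0)] with s hs
    exact Complex.Gamma_eq_integral hs
  have hval := hderiv.unique Complex.hasDerivAt_Gamma_one
  simp only [sub_self, Complex.cpow_zero, one_mul] at hval
  rw [← Complex.ofReal_inj, ← integral_complex_ofReal]
  simp only [Complex.ofReal_mul, Complex.ofReal_neg]
  exact hval

theorem integrableOn_log_mul_exp_neg :
    IntegrableOn (fun t : ℝ => log t * exp (-t)) (Ioi 0) :=
  -- a non-integrable function has integral `0`, while `γ > 0`
  Integrable.of_integral_ne_zero <| by
    rw [integral_log_mul_exp_neg, neg_ne_zero]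
    linarith [one_half_lt_eulerMascheroniConstant]

theorem integral_log_mul_exp_neg_mul {c : ℝ} (hc : 0 < c) :
    ∫ t in Ioi (0 : ℝ), log t * (c * exp (-c * t)) = -(log c + eulerMascheroniConstant) := by
  have hexp : IntegrableOn (fun u : ℝ => exp (-u)) (Ioi 0) := by
    simpa using exp_neg_integrableOn_Ioi 0 one_pos
  calc ∫ t in Ioi (0 : ℝ), log t * (c * exp (-c * t))
      = c * ∫ t in Ioi (0 : ℝ), (log (c * t) - log c) * exp (-(c * t)) := by
        rw [← integral_const_mul]
        refine setIntegral_congr_fun measurableSet_Ioi fun t ht => ?_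
        rw [log_mul hc.ne' (ne_of_gt ht), neg_mul]
        ring
    _ = ∫ u in Ioi (0 : ℝ), (log u - log c) * exp (-u) := by
        rw [integral_comp_mul_left_Ioi (fun u => (log u - log c) * exp (-u)) 0 hc, mul_zero,
          smul_eq_mul, mul_inv_cancel_left₀ hc.ne']
    _ = (∫ u in Ioi (0 : ℝ), log u * exp (-u)) - log c * ∫ u in Ioi (0 : ℝ), exp (-u) := by
        rw [← integral_const_mul,
          ← integral_sub integrableOn_log_mul_exp_neg (hexp.const_mul _)]
        simp only [sub_mul]
    _ = -(log c + eulerMascheroniConstant) := by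
        rw [integral_log_mul_exp_neg, integral_exp_neg_Ioi_zero]
        ring

theorem integral_rpow_mul_exp_neg_mul {q c : ℝ} (hq : -1 < q) (hc : 0 < c) :
    ∫ t in Ioi (0 : ℝ), t ^ q * (c * exp (-c * t)) = c ^ (-q) * Gamma (q + 1) := by
  have h := integral_rpow_mul_exp_neg_mul_rpow one_pos hq hc
  simp only [rpow_one, div_one, mul_one] at h
  simp_rw [mul_left_comm _ c, integral_const_mul, h, neg_add, rpow_add hc, rpow_neg_one]
  field_simp

noncomputable def frechetPDF (α c z : ℝ) : ℝ :=
  α * c * z ^ (-α - 1) * exp (-c * z ^ (-α))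

theorem integral_mul_frechetPDF {α : ℝ} (hα : 0 < α) (c : ℝ) (g : ℝ → ℝ) :
    ∫ z in Ioi (0 : ℝ), g z * frechetPDF α c z =
      ∫ t in Ioi (0 : ℝ), g (t ^ (-α⁻¹)) * (c * exp (-c * t)) := by
  rw [← integral_comp_rpow_Ioi (fun t => g (t ^ (-α⁻¹)) * (c * exp (-c * t)))
    (neg_ne_zero.2 hα.ne')]
  refine setIntegral_congr_fun measurableSet_Ioi fun z hz => ?_
  rw [← rpow_mul (le_of_lt hz), neg_mul_neg, mul_inv_cancel₀ hα.ne', rpow_one, abs_neg,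
    abs_of_pos hα, smul_eq_mul, frechetPDF]
  ring

theorem integral_log_mul_frechetPDF {α c : ℝ} (hα : 0 < α) (hc : 0 < c) :
    ∫ z in Ioi (0 : ℝ), log z * frechetPDF α c z = (log c + eulerMascheroniConstant) / α := by
  calc ∫ z in Ioi (0 : ℝ), log z * frechetPDF α c z
      = ∫ t in Ioi (0 : ℝ), -α⁻¹ * (log t * (c * exp (-c * t))) := by
        rw [integral_mul_frechetPDF hα]
        refine setIntegral_congr_fun measurableSet_Ioi fun t ht => ?_
        rw [log_rpow ht, mul_assoc]
    _ = (log c + eulerMascheroniConstant) / α := by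
        rw [integral_const_mul, integral_log_mul_exp_neg_mul hc]
        field_simp

theorem integral_rpow_mul_frechetPDF {α c s : ℝ} (hα : 0 < α) (hc : 0 < c) (hs : s < α) :
    ∫ z in Ioi (0 : ℝ), z ^ s * frechetPDF α c z = c ^ (s / α) * Gamma (1 - s / α) := by
  have hq : -1 < -α⁻¹ * s := by
    rw [neg_mul, neg_lt_neg_iff, inv_mul_lt_one₀ hα]
    exact hs
  calc ∫ z in Ioi (0 : ℝ), z ^ s * frechetPDF α c z
      = ∫ t in Ioi (0 : ℝ), t ^ (-α⁻¹ * s) * (c * exp (-c * t)) := by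
        rw [integral_mul_frechetPDF hα]
        refine setIntegral_congr_fun measurableSet_Ioi fun t ht => ?_
        rw [← rpow_mul ht.le]
    _ = c ^ (s / α) * Gamma (1 - s / α) := by
        rw [integral_rpow_mul_exp_neg_mul hq hc]
        ring_nf

end

/-- **Fréchet user gains: the high-SNR gaps do not depend on the number of users.** Let
`α > 1` and `K ≥ 1`, and let `Z` have density
`f(z) = α·K·z^{−α−1}·exp(−K·z^{−α})` on `(0,∞)` (the maximum of `K` i.i.d. standard
Fréchet(α) variables, with CDF `exp(−K·z^{−α})`). Then `E[log Z] = (log K + γ_em)/α`,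
`E[Z⁻¹] = K^{−1/α}·Γ(1 + 1/α)` and `E[Z] = K^{1/α}·Γ(1 − 1/α)`; consequently the high-SNR
gap between optimal power-and-rate adaptation and channel inversion is
`E[log Z] + log(E[Z⁻¹]) = γ_em/α + log Γ(1 + 1/α)`, and the gap between AWGN and channel
inversion is `log(E[Z]·E[Z⁻¹]) = log(Γ(1 − 1/α)·Γ(1 + 1/α))` — neither depends on `K`. -/
theorem frechet_gaps_independent_of_users (α : ℝ) (hα : 1 < α) (K : ℕ) (hK : 1 ≤ K) :
    (∫ z in Set.Ioi (0:ℝ),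
        Real.log z * (α * (K:ℝ) * z ^ (-α - 1) * Real.exp (-(K:ℝ) * z ^ (-α))) =
      (Real.log (K:ℝ) + Real.eulerMascheroniConstant) / α) ∧
    (∫ z in Set.Ioi (0:ℝ),
        z⁻¹ * (α * (K:ℝ) * z ^ (-α - 1) * Real.exp (-(K:ℝ) * z ^ (-α))) =
      (K:ℝ) ^ (-(1/α)) * Real.Gamma (1 + 1/α)) ∧
    (∫ z in Set.Ioi (0:ℝ),
        z * (α * (K:ℝ) * z ^ (-α - 1) * Real.exp (-(K:ℝ) * z ^ (-α))) =
      (K:ℝ) ^ (1/α) * Real.Gamma (1 - 1/α)) ∧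
    ((∫ z in Set.Ioi (0:ℝ),
        Real.log z * (α * (K:ℝ) * z ^ (-α - 1) * Real.exp (-(K:ℝ) * z ^ (-α)))) +
      Real.log (∫ z in Set.Ioi (0:ℝ),
        z⁻¹ * (α * (K:ℝ) * z ^ (-α - 1) * Real.exp (-(K:ℝ) * z ^ (-α)))) =
      Real.eulerMascheroniConstant / α + Real.log (Real.Gamma (1 + 1/α))) ∧
    (Real.log ((∫ z in Set.Ioi (0:ℝ),
          z * (α * (K:ℝ) * z ^ (-α - 1) * Real.exp (-(K:ℝ) * z ^ (-α)))) *
        (∫ z in Set.Ioi (0:ℝ),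
          z⁻¹ * (α * (K:ℝ) * z ^ (-α - 1) * Real.exp (-(K:ℝ) * z ^ (-α))))) =
      Real.log (Real.Gamma (1 - 1/α) * Real.Gamma (1 + 1/α))) := by
  have hα0 : 0 < α := by linarith
  have hK0 : (0 : ℝ) < K := Nat.cast_pos.mpr hK
  have hlog := integral_log_mul_frechetPDF hα0 hK0
  have hinv := integral_rpow_mul_frechetPDF hα0 hK0 (s := -1) (by linarith)
  have hmean := integral_rpow_mul_frechetPDF hα0 hK0 (s := 1) hα
  simp only [frechetPDF, Real.rpow_neg_one, Real.rpow_one, neg_div, sub_neg_eq_add]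
    at hlog hinv hmean
  have hΓ : 0 < Real.Gamma (1 + 1 / α) := Real.Gamma_pos_of_pos (by positivity)
  refine ⟨hlog, hinv, hmean, ?_, ?_⟩
  · rw [hlog, hinv, Real.log_mul (Real.rpow_pos_of_pos hK0 _).ne' hΓ.ne', Real.log_rpow hK0]
    ring
  · rw [hmean, hinv, mul_mul_mul_comm, ← Real.rpow_add hK0, add_neg_cancel, Real.rpow_zero,
      one_mul]
end
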